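/- arXiv:2204.10237 — 8 statements merged into one kernel-verified Lean document; each statement's English description precedes it below -/
import Mathlib

section
/- Let n ≥ 1 and s ≥ 1. Let {M_k}_{k∈ℕ} be a sequence of n×n complex matrices converging (entrywise) to an n×n complex matrix M. For each i ∈ {1, …, s} let {λ_{i,k}}_{k∈ℕ} be a sequence of complex numbers converging to a common value μ ∈ ℂ, and assume that for every k the numbers λ_{1,k}, …, λ_{s,k} are pairwise distinct. Then for all natural numbers d₁, …, d_s, setting D = d₁ + ⋯ + d_s, there exists K such that for every k ≥ K: Σ_{i=1}^{s} ( n − rank((M_k − λ_{i,k}·I)^{d_i}) ) ≤ n − rank((M − μ·I)^{D}). -/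
open Filter

section CoalescenceAux
open Filter Module LinearMap Matrix Polynomial
open scoped ComplexOrder

-- aux 1: sum of finranks of an independent family of submodules all inside W
lemma coal_sum_finrank_le {K E : Type*} [Field K] [AddCommGroup E] [Module K E]
    [FiniteDimensional K E] {ι : Type*} [Fintype ι] {V : ι → Submodule K E}
    (h : iSupIndep V) {W : Submodule K E} (hle : ∀ i, V i ≤ W) :
    ∑ i, Module.finrank K (V i) ≤ Module.finrank K W := by
  have key : ∀ t : Finset ι, ∑ i ∈ t, Module.finrank K (V i)
      ≤ Module.finrank K ↥(t.sup V) := by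
    classical
    intro t
    induction t using Finset.induction_on with
    | empty => simp
    | @insert a t ha ih =>
      have hdisj : Disjoint (V a) (t.sup V) := by
        refine (h a).mono_right ?_
        refine Finset.sup_le fun j hj => ?_
        exact le_iSup₂ (f := fun j (_ : j ≠ a) => V j) j (ne_of_mem_of_not_mem hj ha)
      have hsum := Submodule.finrank_sup_add_finrank_inf_eq (V a) (t.sup V)
      rw [hdisj.eq_bot, finrank_bot] at hsum
      rw [Finset.sum_insert ha, Finset.sup_insert]
      omega
  calc ∑ i, Module.finrank K (V i) ≤ Module.finrank K ↥(Finset.univ.sup V) := key _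
    _ ≤ Module.finrank K W := Submodule.finrank_mono (Finset.sup_le fun i _ => hle i)

-- aux 2: lower semicontinuity of rank
lemma coal_rank_semicont {n : ℕ} {P : ℕ → Matrix (Fin n) (Fin n) ℂ}
    {B : Matrix (Fin n) (Fin n) ℂ} (h : Tendsto P atTop (nhds B)) :
    ∀ᶠ k in atTop, B.rank ≤ (P k).rank := by
  classical
  set r := B.rank with hr
  -- pick a basis of the range of B
  have hrfin : Module.finrank ℂ ↥(LinearMap.range B.mulVecLin) = r := rfl
  let b : Basis (Fin r) ℂ ↥(LinearMap.range B.mulVecLin) :=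
    (Module.finBasis ℂ ↥(LinearMap.range B.mulVecLin)).reindex (finCongr hrfin)
  have hb : ∀ j : Fin r, ∃ v : Fin n → ℂ, B.mulVecLin v = (b j : Fin n → ℂ) :=
    fun j => LinearMap.mem_range.mp (b j).2
  choose v hv using hb
  let R : Matrix (Fin n) (Fin r) ℂ := Matrix.of fun i j => v j i
  let C : Matrix (Fin n) (Fin r) ℂ := B * R
  have hCcol : ∀ j : Fin r, C.mulVecLin (Pi.single j 1) = (b j : Fin n → ℂ) := by
    intro j
    have h1 : R *ᵥ Pi.single j 1 = v j := by
      rw [Matrix.mulVec_single_one]; rfl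
    rw [Matrix.mulVecLin_apply, ← Matrix.mulVec_mulVec, h1, ← Matrix.mulVecLin_apply, hv]
  -- rank C = r
  have hrange : LinearMap.range B.mulVecLin ≤ LinearMap.range C.mulVecLin := by
    have hspan : LinearMap.range B.mulVecLin
        = Submodule.span ℂ (Set.range fun j => (b j : Fin n → ℂ)) := by
      conv_lhs => rw [← Submodule.map_subtype_top (LinearMap.range B.mulVecLin), ← b.span_eq]
      rw [Submodule.map_span]
      congr 1
      ext x
      simp [Set.range_comp]
    rw [hspan, Submodule.span_le]
    rintro x ⟨j, rfl⟩
    exact ⟨Pi.single j 1, hCcol j⟩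
  have hCrank : C.rank = r := by
    refine le_antisymm ?_ ?_
    · simpa using C.rank_le_card_width
    · calc r = Module.finrank ℂ ↥(LinearMap.range B.mulVecLin) := hrfin.symm
        _ ≤ Module.finrank ℂ ↥(LinearMap.range C.mulVecLin) := Submodule.finrank_mono hrange
        _ = C.rank := rfl
  -- A₀ := Cᴴ * C is an r×r matrix of full rank, hence nonzero determinant
  have hA0rank : (Cᴴ * C).rank = r := by rw [Matrix.rank_conjTranspose_mul_self, hCrank]
  have hdet : (Cᴴ * C).det ≠ 0 := by
    intro hdet0
    obtain ⟨w, hw0, hw⟩ := (Matrix.exists_mulVec_eq_zero_iff).mpr hdet0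
    have hker : LinearMap.ker (Cᴴ * C).mulVecLin ≠ ⊥ := by
      intro hbot
      have : w ∈ LinearMap.ker (Cᴴ * C).mulVecLin := by
        simpa [Matrix.mulVecLin_apply] using hw
      rw [hbot, Submodule.mem_bot] at this
      exact hw0 this
    have hrn : (Cᴴ * C).rank + Module.finrank ℂ ↥(LinearMap.ker (Cᴴ * C).mulVecLin) = r := by
      have := LinearMap.finrank_range_add_finrank_ker (Cᴴ * C).mulVecLin
      rwa [Module.finrank_fin_fun] at this
    have : Module.finrank ℂ ↥(LinearMap.ker (Cᴴ * C).mulVecLin) = 0 := by omega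
    exact hker (Submodule.finrank_eq_zero.mp this)
  -- continuity
  have hcont : Tendsto (fun k => (Cᴴ * (P k * R)).det) atTop (nhds (Cᴴ * C).det) := by
    have hcontfun : Continuous fun Z : Matrix (Fin n) (Fin n) ℂ => (Cᴴ * (Z * R)).det :=
      (continuous_const.matrix_mul (continuous_id.matrix_mul continuous_const)).matrix_det
    exact (hcontfun.tendsto B).comp h
  filter_upwards [hcont.eventually_ne hdet] with k hk
  have hunit : IsUnit (Cᴴ * (P k * R)) :=
    (Matrix.isUnit_iff_isUnit_det _).mpr (isUnit_iff_ne_zero.mpr hk)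
  have h1 : (Cᴴ * (P k * R)).rank = r := by
    rw [Matrix.rank_of_isUnit _ hunit, Fintype.card_fin]
  calc B.rank = (Cᴴ * (P k * R)).rank := h1.symm
    _ ≤ (P k * R).rank := Matrix.rank_mul_le_right _ _
    _ ≤ (P k).rank := Matrix.rank_mul_le_left _ _

-- powers of a single element: list product
lemma coal_prod_ofFn_pow {Mo : Type*} [Monoid Mo] (x : Mo) :
    ∀ {s : ℕ} (d : Fin s → ℕ), (List.ofFn fun i => x ^ d i).prod = x ^ ∑ i, d i := by
  intro s
  induction s with
  | zero => intro d; simp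
  | succ m ih =>
    intro d
    rw [List.ofFn_succ, List.prod_cons, Fin.sum_univ_succ, pow_add]
    congr 1
    exact ih fun i => d i.succ

-- aeval of the product polynomial equals the matrix list product
lemma coal_aeval_prod {n s : ℕ} (A : Matrix (Fin n) (Fin n) ℂ) (c : Fin s → ℂ) (d : Fin s → ℕ) :
    (aeval A (∏ i, (X - C (c i)) ^ d i) : Matrix (Fin n) (Fin n) ℂ)
      = (List.ofFn fun i => (A - c i • (1 : Matrix (Fin n) (Fin n) ℂ)) ^ d i).prod := by
  rw [← List.prod_ofFn, map_list_prod (aeval A : ℂ[X] →ₐ[ℂ] Matrix (Fin n) (Fin n) ℂ),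
    List.map_ofFn]
  refine congrArg _ (congrArg _ (funext fun i => ?_))
  simp [Function.comp, map_pow, map_sub, aeval_X, aeval_C, Algebra.algebraMap_eq_smul_one]

-- per-k algebraic lemma
lemma coal_alg {n s : ℕ} (A : Matrix (Fin n) (Fin n) ℂ) (c : Fin s → ℂ)
    (hc : Function.Injective c) (d : Fin s → ℕ) :
    ∑ i : Fin s, (n - ((A - c i • (1 : Matrix (Fin n) (Fin n) ℂ)) ^ d i).rank)
      ≤ n - ((List.ofFn fun i => (A - c i • (1 : Matrix (Fin n) (Fin n) ℂ)) ^ d i).prod).rank := by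
  classical
  have hnul : ∀ Z : Matrix (Fin n) (Fin n) ℂ,
      n - Z.rank = Module.finrank ℂ ↥(LinearMap.ker Z.mulVecLin) := by
    intro Z
    have := LinearMap.finrank_range_add_finrank_ker Z.mulVecLin
    rw [Module.finrank_fin_fun] at this
    have hrk : Z.rank = Module.finrank ℂ ↥(LinearMap.range Z.mulVecLin) := rfl
    omega
  set f : Module.End ℂ (Fin n → ℂ) := Matrix.toLinAlgEquiv' A with hf
  have hF : ∀ Z : Matrix (Fin n) (Fin n) ℂ,
      (Matrix.toLinAlgEquiv' Z : (Fin n → ℂ) →ₗ[ℂ] (Fin n → ℂ)) = Z.mulVecLin := fun _ => rfl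
  have hgi : ∀ i : Fin s, ((A - c i • (1 : Matrix (Fin n) (Fin n) ℂ)) ^ d i).mulVecLin
      = (f - c i • (1 : Module.End ℂ (Fin n → ℂ))) ^ d i := by
    intro i
    rw [← hF, map_pow, map_sub, _root_.map_smul, _root_.map_one]
  set V : Fin s → Submodule ℂ (Fin n → ℂ) := fun i =>
    LinearMap.ker ((A - c i • (1 : Matrix (Fin n) (Fin n) ℂ)) ^ d i).mulVecLin with hV
  have hVgen : ∀ i, V i = (f.genEigenspace (c i)) (d i : ℕ∞) := by
    intro i
    rw [Module.End.genEigenspace_nat]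
    exact congrArg (fun T : Module.End ℂ (Fin n → ℂ) => LinearMap.ker T) (hgi i)
  have hindep : iSupIndep V := by
    have h1 : iSupIndep fun i : Fin s => (f.genEigenspace (c i)) (⊤ : ℕ∞) :=
      (Module.End.independent_genEigenspace f ⊤).comp hc
    refine h1.mono fun i => ?_
    rw [hVgen i]
    exact (f.genEigenspace (c i)).monotone le_top
  -- the product
  set q : ℂ[X] := ∏ i, (X - C (c i)) ^ d i with hq
  have hprod : (List.ofFn fun i => (A - c i • (1 : Matrix (Fin n) (Fin n) ℂ)) ^ d i).prod
      = aeval A q := (coal_aeval_prod A c d).symm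
  have hPF : ((List.ofFn fun i => (A - c i • (1 : Matrix (Fin n) (Fin n) ℂ)) ^ d i).prod).mulVecLin
      = aeval f q := by
    rw [hprod, ← hF]
    exact (Polynomial.aeval_algHom_apply (Matrix.toLinAlgEquiv' (n := Fin n) (R := ℂ)) A q).symm
  have hle : ∀ i, V i ≤ LinearMap.ker
      (((List.ofFn fun i => (A - c i • (1 : Matrix (Fin n) (Fin n) ℂ)) ^ d i).prod).mulVecLin) := by
    intro i x hx
    rw [LinearMap.mem_ker, hPF]
    have hsplit : q = (∏ j ∈ Finset.univ.erase i, (X - C (c j)) ^ d j) * (X - C (c i)) ^ d i := by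
      rw [hq, Finset.prod_erase_mul _ _ (Finset.mem_univ i)]
    have hfac : (aeval f ((X - C (c i)) ^ d i) : Module.End ℂ (Fin n → ℂ))
        = (f - c i • (1 : Module.End ℂ (Fin n → ℂ))) ^ d i := by
      rw [map_pow, map_sub, aeval_X, aeval_C, Algebra.algebraMap_eq_smul_one]
    have hxi : ((f - c i • (1 : Module.End ℂ (Fin n → ℂ))) ^ d i) x = 0 := by
      have hx' : x ∈ LinearMap.ker ((A - c i • (1 : Matrix (Fin n) (Fin n) ℂ)) ^ d i).mulVecLin :=
        hx
      rw [hgi i] at hx'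
      exact hx'
    rw [hsplit, _root_.map_mul, Module.End.mul_apply, hfac, hxi, _root_.map_zero]
  calc ∑ i : Fin s, (n - ((A - c i • (1 : Matrix (Fin n) (Fin n) ℂ)) ^ d i).rank)
      = ∑ i : Fin s, Module.finrank ℂ ↥(V i) := by
        refine Finset.sum_congr rfl fun i _ => ?_
        rw [hnul, hV]
    _ ≤ Module.finrank ℂ ↥(LinearMap.ker
        (((List.ofFn fun i => (A - c i • (1 : Matrix (Fin n) (Fin n) ℂ)) ^ d i).prod).mulVecLin)) :=
        coal_sum_finrank_le hindep hle
    _ = n - ((List.ofFn fun i => (A - c i • (1 : Matrix (Fin n) (Fin n) ℂ)) ^ d i).prod).rank :=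
        (hnul _).symm

end CoalescenceAux

/-- Semicontinuity of coalescing spectral information (matrix instance): if `Mₖ → M` and,
for each `i`, the pairwise distinct eigenvalue candidates `λ_{i,k}` all converge to a common
value `μ`, then eventually the sum of the nullities `n - rank((Mₖ - λ_{i,k}·I)^{dᵢ})` is at
most the nullity `n - rank((M - μ·I)^{D})`, where `D = d₁ + ⋯ + d_s`. -/
theorem coalescence_semicontinuity (n s : ℕ) (hn : 1 ≤ n) (hs : 1 ≤ s)
    (Mseq : ℕ → Matrix (Fin n) (Fin n) ℂ) (M : Matrix (Fin n) (Fin n) ℂ)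
    (hM : Tendsto Mseq atTop (nhds M))
    (lam : Fin s → ℕ → ℂ) (μ : ℂ)
    (hlam : ∀ i : Fin s, Tendsto (lam i) atTop (nhds μ))
    (hdist : ∀ k : ℕ, Function.Injective (fun i : Fin s => lam i k))
    (d : Fin s → ℕ) :
    ∃ K : ℕ, ∀ k ≥ K,
      ∑ i : Fin s, (n - ((Mseq k - lam i k • (1 : Matrix (Fin n) (Fin n) ℂ)) ^ d i).rank)
        ≤ n - ((M - μ • (1 : Matrix (Fin n) (Fin n) ℂ)) ^ (∑ i : Fin s, d i)).rank := by
  classical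
  set Pmat : ℕ → Matrix (Fin n) (Fin n) ℂ := fun k =>
    (List.ofFn fun i : Fin s =>
      (Mseq k - lam i k • (1 : Matrix (Fin n) (Fin n) ℂ)) ^ d i).prod with hP
  have hlim : Tendsto Pmat atTop
      (nhds ((M - μ • (1 : Matrix (Fin n) (Fin n) ℂ)) ^ (∑ i : Fin s, d i))) := by
    have h1 := tendsto_list_prod
      (f := fun (i : Fin s) (k : ℕ) =>
        (Mseq k - lam i k • (1 : Matrix (Fin n) (Fin n) ℂ)) ^ d i)
      (x := atTop)
      (a := fun i => (M - μ • (1 : Matrix (Fin n) (Fin n) ℂ)) ^ d i) (List.finRange s)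
      (fun i _ => (hM.sub ((hlam i).smul_const 1)).pow (d i))
    have e1 : (fun k : ℕ => ((List.finRange s).map fun i =>
        (Mseq k - lam i k • (1 : Matrix (Fin n) (Fin n) ℂ)) ^ d i).prod) = Pmat := by
      funext k
      show _ = (List.ofFn fun i => (Mseq k - lam i k • (1 : Matrix (Fin n) (Fin n) ℂ)) ^ d i).prod
      rw [List.ofFn_eq_map]
    have e2 : (((List.finRange s).map fun i =>
        (M - μ • (1 : Matrix (Fin n) (Fin n) ℂ)) ^ d i)).prod
        = (M - μ • (1 : Matrix (Fin n) (Fin n) ℂ)) ^ (∑ i : Fin s, d i) := by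
      rw [← List.ofFn_eq_map, coal_prod_ofFn_pow]
    rw [e1, e2] at h1
    exact h1
  have hsemi := coal_rank_semicont hlim
  rw [Filter.eventually_atTop] at hsemi
  obtain ⟨K, hK⟩ := hsemi
  refine ⟨K, fun k hk => ?_⟩
  calc ∑ i : Fin s, (n - ((Mseq k - lam i k • (1 : Matrix (Fin n) (Fin n) ℂ)) ^ d i).rank)
      ≤ n - (Pmat k).rank := coal_alg (Mseq k) (fun i => lam i k) (hdist k) d
    _ ≤ n - ((M - μ • (1 : Matrix (Fin n) (Fin n) ℂ)) ^ (∑ i : Fin s, d i)).rank :=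
        Nat.sub_le_sub_left (hK k hk) n
end

section
/- Let μ ∈ ℂ, let s ≥ 1, and let k₁, …, k_s be positive integers with K = k₁ + ⋯ + k_s. Then the single K×K Jordan block J_K(μ) (the K×K matrix with μ on the diagonal, 1 on the superdiagonal, and zeros elsewhere) belongs to the closure, in the space of K×K complex matrices with its standard topology, of the set { P · (J_{k₁}(a₁) ⊕ ⋯ ⊕ J_{k_s}(a_s)) · P⁻¹ : a₁, …, a_s ∈ ℂ pairwise distinct, P an invertible K×K complex matrix }, where ⊕ denotes the block-diagonal direct sum. -/
/-!
If `p` is monic of degree `n` and generates the annihilator `{q | q(A) v = 0}` of a vector `v`,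
then the Krylov matrix `(v, A v, …, Aⁿ⁻¹ v)` is invertible and conjugates `A` to the companion
matrix `C(p)`. The last basis vector of each block is such a vector for `J_K(μ)`, with
`p = (X - μ)^K`, and for `J_{k₁}(a₁) ⊕ ⋯ ⊕ J_{k_s}(a_s)` with the `aᵢ` distinct, with
`p = pₐ = ∏ (X - aᵢ)^{kᵢ}`, since the factors `(X - aᵢ)^{kᵢ}` are pairwise coprime.
Hence `J_K(μ) = P C((X - μ)^K) P⁻¹` is the limit of `P C(pₐ) P⁻¹`, a conjugate of the direct sum,
as `a → (μ, …, μ)` through injective `a`: the coefficients of `pₐ` are polynomial in `a`.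
-/

/-- The `k × k` Jordan block with eigenvalue `a`: `a` on the diagonal, `1` on the
superdiagonal, zeros elsewhere. -/
def jordanBlock (k : ℕ) (a : ℂ) : Matrix (Fin k) (Fin k) ℂ :=
  fun i j => if (j : ℕ) = (i : ℕ) then a else if (j : ℕ) = (i : ℕ) + 1 then 1 else 0

open Polynomial Matrix Filter Topology

namespace Matrix

theorem aeval_reindex {R m n : Type*} [CommRing R] [Fintype m] [DecidableEq m] [Fintype n]
    [DecidableEq n] (e : m ≃ n) (M : Matrix m m R) (q : R[X]) :
    aeval (reindex e e M) q = reindex e e (aeval M q) :=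
  aeval_algHom_apply (reindexAlgEquiv R R e) M q

section Krylov

variable {R : Type*} [CommRing R] {n : ℕ}

/-- The companion matrix of a monic `p` of degree `n` (the size is not read off `p`). -/
def companion (p : R[X]) (n : ℕ) : Matrix (Fin n) (Fin n) R :=
  of fun i j => if (j : ℕ) + 1 = n then -p.coeff i else if (i : ℕ) = j + 1 then 1 else 0

def krylov (A : Matrix (Fin n) (Fin n) R) (v : Fin n → R) : Matrix (Fin n) (Fin n) R :=
  of fun i j => (A ^ (j : ℕ) *ᵥ v) i

theorem krylov_mulVec (A : Matrix (Fin n) (Fin n) R) (v c : Fin n → R) :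
    krylov A v *ᵥ c = aeval A (∑ j, C (c j) * X ^ (j : ℕ)) *ᵥ v := by
  have haeval : aeval A (∑ j, C (c j) * X ^ (j : ℕ)) = ∑ j, c j • A ^ (j : ℕ) := by
    simp [Algebra.smul_def]
  rw [haeval, sum_mulVec, mulVec_eq_sum]
  simp only [smul_mulVec, op_smul_eq_smul]
  rfl

theorem pow_eq_neg_sum_coeff_smul_pow {A : Matrix (Fin n) (Fin n) R} {p : R[X]} (hp : p.Monic)
    (hn : p.natDegree = n) (hA : aeval A p = 0) :
    A ^ n = -∑ l : Fin n, p.coeff l • A ^ (l : ℕ) := by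
  have hsum := aeval_eq_sum_range' (x := A) (n := n + 1) (by omega : p.natDegree < n + 1)
  rw [Finset.sum_range_succ, show p.coeff n = 1 from hn ▸ hp.coeff_natDegree, one_smul,
    hA] at hsum
  rw [eq_neg_iff_add_eq_zero, hsum, Fin.sum_univ_eq_sum_range (fun l => p.coeff l • A ^ l),
    add_comm]

theorem mul_krylov {A : Matrix (Fin n) (Fin n) R} (v : Fin n → R) {p : R[X]} (hp : p.Monic)
    (hn : p.natDegree = n) (hA : aeval A p = 0) :
    A * krylov A v = krylov A v * companion p n := by
  ext i j
  have hcol : (A * krylov A v) i j = (A ^ ((j : ℕ) + 1) *ᵥ v) i := by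
    rw [pow_succ', ← mulVec_mulVec]; rfl
  rw [hcol, mul_apply]
  by_cases hj : (j : ℕ) + 1 = n
  · simp only [krylov, companion, of_apply, if_pos hj]
    rw [hj, pow_eq_neg_sum_coeff_smul_pow hp hn hA]
    simp only [neg_mulVec, sum_mulVec, smul_mulVec, Pi.neg_apply, Finset.sum_apply,
      Pi.smul_apply, smul_eq_mul, mul_neg, Finset.sum_neg_distrib, mul_comm]
  · rw [Finset.sum_eq_single ⟨(j : ℕ) + 1, by omega⟩]
    · simp [krylov, companion, hj]
    · intro l _ hl
      have : (l : ℕ) ≠ j + 1 := fun h => hl (Fin.ext h)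
      simp [companion, hj, this]
    · simp

theorem continuous_companion [TopologicalSpace R] [ContinuousNeg R] {Y : Type*}
    [TopologicalSpace Y] {f : Y → R[X]} (hf : ∀ m, Continuous fun y => (f y).coeff m) :
    Continuous fun y => companion (f y) n :=
  continuous_pi fun i => continuous_pi fun j => by
    simp only [companion, of_apply]
    split_ifs
    exacts [(hf i).neg, continuous_const, continuous_const]

end Krylov

variable {K : Type*} [Field K] {n : ℕ}

theorem linearIndependent_pow_mulVec {A : Matrix (Fin n) (Fin n) K} {v : Fin n → K}
    (hv : ∀ q : K[X], q.degree < n → aeval A q *ᵥ v = 0 → q = 0) :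
    LinearIndependent K fun j : Fin n => A ^ (j : ℕ) *ᵥ v := by
  rw [Fintype.linearIndependent_iff]
  intro c hc j
  have hq : ∑ j : Fin n, C (c j) * X ^ (j : ℕ) = 0 := by
    refine hv _ (degree_sum_fin_lt c) ?_
    rw [← krylov_mulVec, mulVec_eq_sum]
    simp only [op_smul_eq_smul]
    exact hc
  simpa [finsetSum_coeff, coeff_C_mul, coeff_X_pow, Fin.val_eq_val] using congrArg (coeff · j) hq

theorem exists_eq_conj_companion {A : Matrix (Fin n) (Fin n) K} (v : Fin n → K) {p : K[X]}
    (hp : p.Monic) (hn : p.natDegree = n) (hA : aeval A p = 0)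
    (hv : ∀ q : K[X], aeval A q *ᵥ v = 0 → p ∣ q) :
    ∃ P : GL (Fin n) K,
      A = (P : Matrix (Fin n) (Fin n) K) * companion p n * (↑P⁻¹ : Matrix (Fin n) (Fin n) K) := by
  have hindep : LinearIndependent K fun j : Fin n => A ^ (j : ℕ) *ᵥ v :=
    linearIndependent_pow_mulVec fun q hq hqv => eq_zero_of_dvd_of_degree_lt (hv q hqv)
      (by rwa [degree_eq_natDegree hp.ne_zero, hn])
  obtain ⟨P, hP⟩ : IsUnit (krylov A v) := linearIndependent_cols_iff_isUnit.mp hindep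
  refine ⟨P, ?_⟩
  rw [hP, ← mul_krylov v hp hn hA, ← hP, Matrix.mul_assoc, Units.mul_inv, Matrix.mul_one]

variable {R ι : Type*} [CommRing R] [Fintype ι] [DecidableEq ι] {m : ι → Type*}
  [∀ i, Fintype (m i)]

theorem aeval_blockDiagonal' [∀ i, DecidableEq (m i)] (M : ∀ i, Matrix (m i) (m i) R)
    (q : R[X]) : aeval (blockDiagonal' M) q = blockDiagonal' fun i => aeval (M i) q := by
  let φ : (∀ i, Matrix (m i) (m i) R) →ₐ[R] Matrix (Σ i, m i) (Σ i, m i) R :=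
    { blockDiagonal'RingHom m R with
      commutes' := fun c => by simp [Algebra.algebraMap_eq_smul_one, blockDiagonal'_one] }
  rw [← aeval_pi_apply]
  exact aeval_algHom_apply φ M q

theorem blockDiagonal'_mulVec_apply (M : ∀ i, Matrix (m i) (m i) R) (x : (Σ i, m i) → R)
    (i : ι) (j : m i) : (blockDiagonal' M *ᵥ x) ⟨i, j⟩ = (M i *ᵥ fun j' => x ⟨i, j'⟩) j := by
  simp only [mulVec, dotProduct, Fintype.sum_sigma]
  rw [Finset.sum_eq_single i]
  · simp [blockDiagonal'_apply_eq]
  · intro i' _ hi'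
    exact Finset.sum_eq_zero fun j' _ => by
      rw [blockDiagonal'_apply_ne _ _ _ (Ne.symm hi'), zero_mul]
  · simp

end Matrix

/-- The last standard basis vector of `ℂᵏ` (zero when `k = 0`), a cyclic vector for every
`jordanBlock k a`. -/
def lastVec (k : ℕ) : Fin k → ℂ := fun i => if (i : ℕ) + 1 = k then 1 else 0

theorem jordanBlock_eq_jordanBlock_zero_add (k : ℕ) (a : ℂ) :
    jordanBlock k a = jordanBlock k 0 + algebraMap ℂ _ a := by
  ext i j
  rw [Matrix.add_apply, algebraMap_matrix_apply]
  by_cases h : j = i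
  · simp [jordanBlock, h]
  · have h' : (j : ℕ) ≠ i := fun e => h (Fin.ext e)
    simp [jordanBlock, h', Ne.symm h]

theorem jordanBlock_zero_pow_apply (k m : ℕ) (i j : Fin k) :
    (jordanBlock k 0 ^ m) i j = if (j : ℕ) = i + m then 1 else 0 := by
  induction m generalizing j with
  | zero => simp [one_apply, Fin.ext_iff, eq_comm]
  | succ m ih =>
    rw [pow_succ, mul_apply]
    by_cases hj : (j : ℕ) = i + m + 1
    · rw [if_pos (by omega), Finset.sum_eq_single (⟨i + m, by omega⟩ : Fin k)]
      · simp [ih, jordanBlock, hj]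
      · intro l _ hl
        have : (l : ℕ) ≠ i + m := fun e => hl (Fin.ext e)
        simp [ih, this]
      · simp
    · rw [if_neg (by omega)]
      refine Finset.sum_eq_zero fun l _ => ?_
      by_cases hl : (l : ℕ) = i + m
      · have : (j : ℕ) ≠ l + 1 := by omega
        simp [jordanBlock, this]
      · simp [ih, hl]

theorem jordanBlock_zero_pow_self (k : ℕ) : jordanBlock k 0 ^ k = 0 := by
  ext i j
  have := j.isLt
  rw [jordanBlock_zero_pow_apply, if_neg (by omega), Matrix.zero_apply]

theorem jordanBlock_zero_pow_mulVec_lastVec (k m : ℕ) (i : Fin k) :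
    (jordanBlock k 0 ^ m *ᵥ lastVec k) i = if (i : ℕ) + m + 1 = k then 1 else 0 := by
  simp only [mulVec, dotProduct, jordanBlock_zero_pow_apply, lastVec, ite_mul, one_mul, zero_mul]
  by_cases h : (i : ℕ) + m + 1 = k
  · rw [if_pos h, Finset.sum_eq_single (⟨i + m, by omega⟩ : Fin k)]
    · simp [h]
    · intro l _ hl
      have : (l : ℕ) ≠ i + m := fun e => hl (Fin.ext e)
      simp [this]
    · simp
  · rw [if_neg h]
    refine Finset.sum_eq_zero fun l _ => ?_
    split_ifs <;> first | rfl | omega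

theorem aeval_jordanBlock_zero_mulVec_lastVec (k : ℕ) (r : ℂ[X]) (i : Fin k) :
    (aeval (jordanBlock k 0) r *ᵥ lastVec k) i = r.coeff (k - 1 - i) := by
  have hi := i.isLt
  rw [aeval_eq_sum_range' (n := r.natDegree + k) (by omega), sum_mulVec, Finset.sum_apply]
  simp only [smul_mulVec, Pi.smul_apply, jordanBlock_zero_pow_mulVec_lastVec, smul_eq_mul,
    mul_ite, mul_one, mul_zero]
  have hcond : ∀ m, (i : ℕ) + m + 1 = k ↔ k - 1 - i = m := fun m => by omega
  simp only [hcond, Finset.sum_ite_eq, Finset.mem_range,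
    if_pos (by omega : k - 1 - i < r.natDegree + k)]

theorem aeval_jordanBlock (k : ℕ) (a : ℂ) (q : ℂ[X]) :
    aeval (jordanBlock k a) q = aeval (jordanBlock k 0) (q.comp (X + C a)) := by
  rw [aeval_comp, map_add, aeval_X, aeval_C, ← jordanBlock_eq_jordanBlock_zero_add]

theorem aeval_jordanBlock_X_sub_C_pow (k : ℕ) (a : ℂ) :
    aeval (jordanBlock k a) ((X - C a) ^ k) = 0 := by
  rw [aeval_jordanBlock, pow_comp, sub_comp, X_comp, C_comp, add_sub_cancel_right, map_pow,
    aeval_X, jordanBlock_zero_pow_self]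

theorem X_sub_C_pow_dvd_of_aeval_jordanBlock_mulVec_eq_zero {k : ℕ} {a : ℂ} {q : ℂ[X]}
    (h : aeval (jordanBlock k a) q *ᵥ lastVec k = 0) : (X - C a) ^ k ∣ q := by
  rw [X_sub_C_pow_dvd_iff, X_pow_dvd_iff]
  intro m hm
  have hcoeff := congrFun h ⟨k - 1 - m, by omega⟩
  rwa [aeval_jordanBlock, aeval_jordanBlock_zero_mulVec_lastVec,
    Nat.sub_sub_self (by omega)] at hcoeff

theorem exists_jordanBlock_eq_conj_companion (k : ℕ) (μ : ℂ) :
    ∃ P : GL (Fin k) ℂ, jordanBlock k μ = (P : Matrix (Fin k) (Fin k) ℂ) *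
      companion ((X - C μ) ^ k) k * (↑P⁻¹ : Matrix (Fin k) (Fin k) ℂ) :=
  exists_eq_conj_companion (lastVec k) ((monic_X_sub_C μ).pow k) (by simp)
    (aeval_jordanBlock_X_sub_C_pow k μ)
    fun _ => X_sub_C_pow_dvd_of_aeval_jordanBlock_mulVec_eq_zero

noncomputable section JordanSum

variable {ι : Type*} [Fintype ι] {k : ι → ℕ} {n : ℕ}

def jordanPoly (k : ι → ℕ) (a : ι → ℂ) : ℂ[X] :=
  ∏ i, (X - C (a i)) ^ k i

def jordanSum [DecidableEq ι] (e : (Σ i, Fin (k i)) ≃ Fin n) (a : ι → ℂ) :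
    Matrix (Fin n) (Fin n) ℂ :=
  reindex e e (blockDiagonal' fun i => jordanBlock (k i) (a i))

def jordanSumVec (e : (Σ i, Fin (k i)) ≃ Fin n) : Fin n → ℂ :=
  (fun x => lastVec (k x.1) x.2) ∘ e.symm

theorem jordanPoly_monic (k : ι → ℕ) (a : ι → ℂ) : (jordanPoly k a).Monic :=
  monic_prod_of_monic _ _ fun i _ => (monic_X_sub_C (a i)).pow (k i)

theorem natDegree_jordanPoly (k : ι → ℕ) (a : ι → ℂ) :
    (jordanPoly k a).natDegree = ∑ i, k i := by
  rw [jordanPoly, natDegree_prod_of_monic _ _ fun i _ => (monic_X_sub_C (a i)).pow (k i)]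
  simp

theorem jordanPoly_const (k : ι → ℕ) (μ : ℂ) :
    jordanPoly k (fun _ => μ) = (X - C μ) ^ ∑ i, k i :=
  Finset.prod_pow_eq_pow_sum _ _ _

theorem continuous_coeff_jordanPoly (k : ι → ℕ) (m : ℕ) :
    Continuous fun a : ι → ℂ => (jordanPoly k a).coeff m := by
  have h : ∀ a, jordanPoly k a =
      Polynomial.map (MvPolynomial.eval a) (∏ i, (X - C (MvPolynomial.X i)) ^ k i) :=
    fun a => by simp [jordanPoly, Polynomial.map_prod]
  simp only [h, coeff_map]
  exact MvPolynomial.continuous_eval _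

variable [DecidableEq ι]

theorem aeval_jordanSum (e : (Σ i, Fin (k i)) ≃ Fin n) (a : ι → ℂ) (q : ℂ[X]) :
    aeval (jordanSum e a) q =
      reindex e e (blockDiagonal' fun i => aeval (jordanBlock (k i) (a i)) q) := by
  rw [jordanSum, aeval_reindex, aeval_blockDiagonal']

theorem aeval_jordanSum_jordanPoly (e : (Σ i, Fin (k i)) ≃ Fin n) (a : ι → ℂ) :
    aeval (jordanSum e a) (jordanPoly k a) = 0 := by
  have hblock : ∀ i, aeval (jordanBlock (k i) (a i)) (jordanPoly k a) = 0 := fun i => by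
    rw [jordanPoly, ← Finset.mul_prod_erase _ _ (Finset.mem_univ i), _root_.map_mul,
      aeval_jordanBlock_X_sub_C_pow, zero_mul]
  simp [aeval_jordanSum, hblock, ← Pi.zero_def]

theorem jordanPoly_dvd_of_aeval_jordanSum_mulVec_eq_zero (e : (Σ i, Fin (k i)) ≃ Fin n)
    {a : ι → ℂ} (ha : Function.Injective a) {q : ℂ[X]}
    (h : aeval (jordanSum e a) q *ᵥ jordanSumVec e = 0) : jordanPoly k a ∣ q := by
  refine Fintype.prod_dvd_of_coprime (fun i j hij => ((pairwise_coprime_X_sub_C ha) hij).pow)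
    fun i => X_sub_C_pow_dvd_of_aeval_jordanBlock_mulVec_eq_zero (funext fun j => ?_)
  have hij := congrFun h (e ⟨i, j⟩)
  rwa [aeval_jordanSum, jordanSumVec, reindex_apply, submatrix_mulVec_equiv, Equiv.symm_symm,
    Function.comp_assoc, Equiv.symm_comp_self, Function.comp_id, Function.comp_apply,
    Equiv.symm_apply_apply, blockDiagonal'_mulVec_apply] at hij

theorem exists_jordanSum_eq_conj_companion (e : (Σ i, Fin (k i)) ≃ Fin n) {a : ι → ℂ}
    (ha : Function.Injective a) :
    ∃ P : GL (Fin n) ℂ, jordanSum e a = (P : Matrix (Fin n) (Fin n) ℂ) *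
      companion (jordanPoly k a) n * (↑P⁻¹ : Matrix (Fin n) (Fin n) ℂ) := by
  have hdeg : (jordanPoly k a).natDegree = n := by
    rw [natDegree_jordanPoly]
    simpa using Fintype.card_congr e
  exact exists_eq_conj_companion (jordanSumVec e) (jordanPoly_monic k a) hdeg
    (aeval_jordanSum_jordanPoly e a)
    fun _ => jordanPoly_dvd_of_aeval_jordanSum_mulVec_eq_zero e ha

end JordanSum

theorem const_mem_closure_setOf_injective (s : ℕ) (μ : ℂ) :
    (fun _ : Fin s => μ) ∈ closure {a : Fin s → ℂ | Function.Injective a} := by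
  have hcont : Continuous fun t : ℂ => fun i : Fin s => μ + t * i := by fun_prop
  have hlim : Tendsto (fun t : ℂ => fun i : Fin s => μ + t * i) (𝓝[≠] 0) (𝓝 fun _ => μ) := by
    simpa using (hcont.tendsto 0).mono_left nhdsWithin_le_nhds
  refine mem_closure_of_tendsto hlim (eventually_nhdsWithin_of_forall fun t ht i j hij => ?_)
  simp only [add_right_inj, mul_eq_mul_left_iff, Nat.cast_inj, Fin.val_inj] at hij
  exact hij.resolve_right ht

theorem jordanBlock_mem_closure_coalescence_general (μ : ℂ) (s : ℕ)
    (k : Fin s → ℕ)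
    (e : (Σ i : Fin s, Fin (k i)) ≃ Fin (∑ i : Fin s, k i)) :
    jordanBlock (∑ i : Fin s, k i) μ ∈
      closure { M : Matrix (Fin (∑ i : Fin s, k i)) (Fin (∑ i : Fin s, k i)) ℂ |
        ∃ a : Fin s → ℂ, Function.Injective a ∧
          ∃ P : GL (Fin (∑ i : Fin s, k i)) ℂ,
            M = (↑P : Matrix (Fin (∑ i : Fin s, k i)) (Fin (∑ i : Fin s, k i)) ℂ) * (Matrix.reindex e e
              (Matrix.blockDiagonal' (fun i : Fin s => jordanBlock (k i) (a i)))) * (↑(P⁻¹) : Matrix (Fin (∑ i : Fin s, k i)) (Fin (∑ i : Fin s, k i)) ℂ) } := by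
  obtain ⟨P, hP⟩ := exists_jordanBlock_eq_conj_companion (∑ i, k i) μ
  let F : (Fin s → ℂ) → Matrix (Fin (∑ i, k i)) (Fin (∑ i, k i)) ℂ := fun a =>
    (P : Matrix _ _ ℂ) * companion (jordanPoly k a) (∑ i, k i) * (↑P⁻¹ : Matrix _ _ ℂ)
  have hF : Continuous F :=
    (continuous_const.matrix_mul (continuous_companion (continuous_coeff_jordanPoly k))).matrix_mul
      continuous_const
  have hJ : jordanBlock (∑ i, k i) μ = F fun _ => μ := by simp only [F, jordanPoly_const, hP]
  rw [hJ]
  refine map_mem_closure hF (const_mem_closure_setOf_injective s μ) fun a ha => ?_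
  obtain ⟨Q, hQ⟩ := exists_jordanSum_eq_conj_companion e ha
  have hC : companion (jordanPoly k a) (∑ i, k i) =
      (↑Q⁻¹ : Matrix _ _ ℂ) * jordanSum e a * (Q : Matrix _ _ ℂ) := by
    simp [hQ, Matrix.mul_assoc]
  refine ⟨a, ha, P * Q⁻¹, ?_⟩
  simp only [F, hC, jordanSum, Units.val_mul, _root_.mul_inv_rev, inv_inv, Matrix.mul_assoc]

/-- Coalescence of eigenvalues for matrices: the single Jordan block `J_K(μ)`, with
`K = k₁ + ⋯ + k_s`, lies in the closure of the set of matrices similar to the direct sum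
`J_{k₁}(a₁) ⊕ ⋯ ⊕ J_{k_s}(a_s)` with `a₁, …, a_s` pairwise distinct. The identification of
the index set `Σ i, Fin (k i)` of the block-diagonal direct sum with `Fin (∑ i, k i)` is
given by an arbitrary equivalence `e`. -/
theorem jordanBlock_mem_closure_coalescence (μ : ℂ) (s : ℕ) (hs : 1 ≤ s)
    (k : Fin s → ℕ) (hk : ∀ i, 1 ≤ k i)
    (e : (Σ i : Fin s, Fin (k i)) ≃ Fin (∑ i : Fin s, k i)) :
    jordanBlock (∑ i : Fin s, k i) μ ∈
      closure { M : Matrix (Fin (∑ i : Fin s, k i)) (Fin (∑ i : Fin s, k i)) ℂ |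
        ∃ a : Fin s → ℂ, Function.Injective a ∧
          ∃ P : GL (Fin (∑ i : Fin s, k i)) ℂ,
            M = (↑P : Matrix (Fin (∑ i : Fin s, k i)) (Fin (∑ i : Fin s, k i)) ℂ) * (Matrix.reindex e e
              (Matrix.blockDiagonal' (fun i : Fin s => jordanBlock (k i) (a i)))) * (↑(P⁻¹) : Matrix (Fin (∑ i : Fin s, k i)) (Fin (∑ i : Fin s, k i)) ℂ) } :=
  jordanBlock_mem_closure_coalescence_general μ s k e
end

section
/- Let A and B be m×n complex matrices and consider the pencil L(λ) = λB + A. Let D ≥ 1 and let ν₁, …, ν_D ∈ ℂ be a sequence in which equal values occupy consecutive positions (i.e., if ν_t = ν_u and t ≤ r ≤ u, then ν_r = ν_t). Let T be the Dm × Dn block matrix, with D×D blocks of size m×n, whose (t,t) block equals ν_t·B + A for each t, whose (t+1,t) block equals B for each t < D, and all of whose other blocks are zero. For each value λ occurring in the sequence, let c_λ be the number of indices t with ν_t = λ. Then rank(T) = Σ_{λ ∈ {ν₁,…,ν_D}} rank(P_λ^{c_λ}(L)); equivalently, the nullity of T equals the sum of the nullities of the matrices P_λ^{c_λ}(L) over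 the distinct values λ of the sequence. -/
/-!
Write `T = N ⊗ B + 1 ⊗ A`, where `N` is the lower bidiagonal matrix with diagonal `ν` and ones
on the subdiagonal; `P_μ^d(L)` is the same construction for the constant sequence `μ`. Since
`(S ⊗ 1) (N ⊗ B + 1 ⊗ A) (S⁻¹ ⊗ 1) = S N S⁻¹ ⊗ B + 1 ⊗ A`, the rank of `T` only depends on the
similarity class of `N`.

Split off the initial run `ν₁ = ⋯ = ν_a = z`. Then `N` is block lower triangular, with diagonal
blocks `N₁ = z + (nilpotent)` and the bidiagonal matrix `N₂` of the remaining values, none of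
which equals `z`, and a single `1` in the coupling block `E`. As `N₂ - z` is invertible and
`N₁ - z` is nilpotent, the Sylvester equation `N₂ X - X N₁ = E` has a solution given by a
terminating Neumann series, and conjugating by `[[1, 0], [X, 1]]` removes `E`. The rank is then
additive over the two diagonal blocks, and induction on the number of runs concludes.
-/

/-- For the pencil `L(λ) = λB + A`, the `dm × dn` block matrix `P_μ^d(L)` with diagonal
blocks `L(μ) = μB + A` and first-subdiagonal blocks `B`. -/
def pencilBlockMat {m n : ℕ} (A B : Matrix (Fin m) (Fin n) ℂ) (μ : ℂ) (d : ℕ) :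
    Matrix (Fin d × Fin m) (Fin d × Fin n) ℂ :=
  fun p q =>
    if p.1 = q.1 then (μ • B + A) p.2 q.2
    else if (p.1 : ℕ) = (q.1 : ℕ) + 1 then B p.2 q.2 else 0

open Matrix Kronecker Module

theorem LinearMap.finrank_range_prodMap {K M N M' N' : Type*} [Field K]
    [AddCommGroup M] [Module K M] [AddCommGroup N] [Module K N] [FiniteDimensional K N]
    [AddCommGroup M'] [Module K M'] [AddCommGroup N'] [Module K N'] [FiniteDimensional K N']
    (f : M →ₗ[K] N) (g : M' →ₗ[K] N') :
    finrank K (range (f.prodMap g)) = finrank K (range f) + finrank K (range g) := by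
  have hfactor : f.prodMap g =
      (f.range.subtype.prodMap g.range.subtype) ∘ₗ (f.rangeRestrict.prodMap g.rangeRestrict) := by
    rw [prodMap_comp]
    rfl
  rw [hfactor, range_comp_of_range_eq_top, finrank_range_of_inj, finrank_prod]
  · exact Prod.map_injective.mpr ⟨Subtype.val_injective, Subtype.val_injective⟩
  · exact range_eq_top.mpr
      (Prod.map_surjective.mpr ⟨f.surjective_rangeRestrict, g.surjective_rangeRestrict⟩)

namespace Matrix

variable {K : Type*} [Field K] {α β : Type*} [Fintype α] [DecidableEq α] [Fintype β]
  [DecidableEq β]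

theorem rank_fromBlocks_zero_zero {m n m' n' : Type*} [Fintype m] [Fintype n] [Fintype m']
    [Fintype n'] (M₁ : Matrix m n K) (M₂ : Matrix m' n' K) :
    (fromBlocks M₁ 0 0 M₂).rank = M₁.rank + M₂.rank := by
  have hfactor : (fromBlocks M₁ 0 0 M₂).mulVecLin =
      (LinearEquiv.sumArrowLequivProdArrow m m' K K).symm.toLinearMap ∘ₗ
        (M₁.mulVecLin.prodMap M₂.mulVecLin) ∘ₗ
        (LinearEquiv.sumArrowLequivProdArrow n n' K K).toLinearMap := by
    ext v i
    rcases i with i | i <;> simp [fromBlocks_mulVec, Function.comp_def] <;> rfl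
  rw [rank, hfactor, LinearMap.range_comp, LinearMap.range_comp_of_range_eq_top _
    (LinearMap.range_eq_top.mpr (LinearEquiv.surjective _)), LinearEquiv.finrank_map_eq,
    LinearMap.finrank_range_prodMap]
  rfl

theorem exists_mul_sub_mul_eq_of_isNilpotent {C : Matrix β β K} (hC : IsUnit C.det)
    {N : Matrix α α K} (hN : IsNilpotent N) (E : Matrix β α K) :
    ∃ X : Matrix β α K, C * X - X * N = E := by
  obtain ⟨p, hp⟩ := hN
  refine ⟨∑ j ∈ Finset.range p, C⁻¹ ^ (j + 1) * E * N ^ j, ?_⟩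
  have htelescope : ∀ j, C * (C⁻¹ ^ (j + 1) * E * N ^ j) - C⁻¹ ^ (j + 1) * E * N ^ j * N =
      C⁻¹ ^ j * E * N ^ j - C⁻¹ ^ (j + 1) * E * N ^ (j + 1) := by
    intro j
    rw [pow_succ' C⁻¹, pow_succ N]
    simp only [← Matrix.mul_assoc, mul_nonsing_inv _ hC, Matrix.one_mul]
  rw [Matrix.mul_sum, Matrix.sum_mul, ← Finset.sum_sub_distrib,
    Finset.sum_congr rfl fun j _ => htelescope j, Finset.sum_range_sub']
  simp [hp]

theorem exists_mul_sub_mul_eq_of_isNilpotent_sub (z : K) {M₁ : Matrix α α K}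
    {M₂ : Matrix β β K} (h₁ : IsNilpotent (M₁ - z • 1)) (h₂ : IsUnit (M₂ - z • 1).det)
    (E : Matrix β α K) : ∃ X : Matrix β α K, M₂ * X - X * M₁ = E := by
  obtain ⟨X, hX⟩ := exists_mul_sub_mul_eq_of_isNilpotent h₂ h₁ E
  refine ⟨X, ?_⟩
  rw [← hX, Matrix.sub_mul, Matrix.mul_sub, Matrix.smul_mul, Matrix.mul_smul, Matrix.one_mul,
    Matrix.mul_one]
  abel

end Matrix

section KroneckerPencil

variable {K : Type*} [Field K] {ι : Type*} [Fintype ι] [DecidableEq ι] {m n : Type*}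

def kroneckerPencil (M : Matrix ι ι K) (A B : Matrix m n K) : Matrix (ι × m) (ι × n) K :=
  M ⊗ₖ B + 1 ⊗ₖ A

variable [Fintype n]

theorem rank_kroneckerPencil_submatrix {κ : Type*} [Fintype κ] [DecidableEq κ]
    (M : Matrix ι ι K) (A B : Matrix m n K) (e : κ ≃ ι) :
    (kroneckerPencil (M.submatrix e e) A B).rank = (kroneckerPencil M A B).rank := by
  have h : kroneckerPencil (M.submatrix e e) A B = (kroneckerPencil M A B).submatrix
      (e.prodCongr (Equiv.refl m)) (e.prodCongr (Equiv.refl n)) := by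
    rw [kroneckerPencil, kroneckerPencil, ← submatrix_one_equiv e, kroneckerMap_submatrix_left,
      kroneckerMap_submatrix_left, submatrix_add]
    rfl
  rw [h, rank_submatrix]

theorem rank_kroneckerPencil_fromBlocks_zero_zero [Fintype m] {α β : Type*} [Fintype α]
    [DecidableEq α] [Fintype β] [DecidableEq β] (M₁ : Matrix α α K) (M₂ : Matrix β β K)
    (A B : Matrix m n K) :
    (kroneckerPencil (fromBlocks M₁ 0 0 M₂) A B).rank =
      (kroneckerPencil M₁ A B).rank + (kroneckerPencil M₂ A B).rank := by
  have h : (kroneckerPencil (fromBlocks M₁ 0 0 M₂) A B).submatrix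
      (Equiv.sumProdDistrib α β m).symm (Equiv.sumProdDistrib α β n).symm =
      fromBlocks (kroneckerPencil M₁ A B) 0 0 (kroneckerPencil M₂ A B) := by
    ext (⟨i, x⟩ | ⟨i, x⟩) (⟨j, y⟩ | ⟨j, y⟩) <;> simp [kroneckerPencil, one_apply]
  rw [← rank_submatrix _ (Equiv.sumProdDistrib α β m).symm (Equiv.sumProdDistrib α β n).symm, h,
    rank_fromBlocks_zero_zero]

variable [Fintype m] [DecidableEq m] [DecidableEq n]

theorem rank_kroneckerPencil_conj (M P Q : Matrix ι ι K) (hPQ : P * Q = 1)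
    (A B : Matrix m n K) :
    (kroneckerPencil (P * M * Q) A B).rank = (kroneckerPencil M A B).rank := by
  have hdet : P.det * Q.det = 1 := by rw [← det_mul, hPQ, det_one]
  have h : kroneckerPencil (P * M * Q) A B =
      (P ⊗ₖ (1 : Matrix m m K)) * kroneckerPencil M A B * (Q ⊗ₖ (1 : Matrix n n K)) := by
    simp only [kroneckerPencil, Matrix.mul_add, Matrix.add_mul, ← mul_kronecker_mul,
      Matrix.mul_one, Matrix.one_mul, hPQ]
  rw [h, rank_mul_eq_left_of_isUnit_det, rank_mul_eq_right_of_isUnit_det]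
  · simpa [det_kronecker] using (IsUnit.of_mul_eq_one _ hdet).pow _
  · simpa [det_kronecker] using (IsUnit.of_mul_eq_one_right _ hdet).pow _

theorem rank_kroneckerPencil_fromBlocks_of_sylvester {α β : Type*} [Fintype α] [DecidableEq α]
    [Fintype β] [DecidableEq β] {M₁ : Matrix α α K} {M₂ : Matrix β β K} {E X : Matrix β α K}
    (hX : M₂ * X - X * M₁ = E) (A B : Matrix m n K) :
    (kroneckerPencil (fromBlocks M₁ 0 E M₂) A B).rank =
      (kroneckerPencil M₁ A B).rank + (kroneckerPencil M₂ A B).rank := by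
  have hPQ : fromBlocks 1 0 X 1 * fromBlocks 1 0 (-X) 1 = (1 : Matrix (α ⊕ β) (α ⊕ β) K) := by
    simp [fromBlocks_multiply]
  have hconj : fromBlocks 1 0 X 1 * fromBlocks M₁ 0 E M₂ * fromBlocks 1 0 (-X) 1 =
      fromBlocks M₁ 0 0 M₂ := by
    simp [fromBlocks_multiply, ← hX]
  rw [← rank_kroneckerPencil_conj _ _ _ hPQ, hconj, rank_kroneckerPencil_fromBlocks_zero_zero]

end KroneckerPencil

section Bidiagonal

variable {K : Type*} [Field K]

def bidiagonal {k : ℕ} (w : Fin k → K) : Matrix (Fin k) (Fin k) K :=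
  fun i j => if i = j then w i else if (i : ℕ) = j + 1 then 1 else 0

theorem bidiagonal_isLowerTriangular {k : ℕ} (w : Fin k → K) :
    (bidiagonal w).IsLowerTriangular := by
  intro i j (hij : i < j)
  have : ¬ (i : ℕ) = j + 1 := by omega
  simp [bidiagonal, hij.ne, this]

theorem bidiagonal_sub_smul_one {k : ℕ} (w : Fin k → K) (z : K) :
    bidiagonal w - z • 1 = bidiagonal (fun i => w i - z) := by
  ext i j
  by_cases h : i = j <;> simp [bidiagonal, one_apply, h]

theorem det_bidiagonal {k : ℕ} (w : Fin k → K) : (bidiagonal w).det = ∏ i, w i := by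
  simp [det_of_isLowerTriangular _ (bidiagonal_isLowerTriangular w), bidiagonal]

theorem isNilpotent_bidiagonal_zero (k : ℕ) : IsNilpotent (bidiagonal (0 : Fin k → K)) := by
  refine ⟨k, ?_⟩
  have h := aeval_self_charpoly (bidiagonal (0 : Fin k → K))
  rw [charpoly, det_of_isLowerTriangular _ (bidiagonal_isLowerTriangular 0).charmatrix] at h
  simpa [bidiagonal, charmatrix_apply] using h

theorem bidiagonal_submatrix_finSumFinEquiv {a b : ℕ} (w : Fin (a + b) → K) :
    (bidiagonal w).submatrix finSumFinEquiv finSumFinEquiv =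
      fromBlocks (bidiagonal fun i => w (Fin.castAdd b i)) 0
        (of fun (j : Fin b) (i : Fin a) => if (j : ℕ) = 0 ∧ (i : ℕ) + 1 = a then 1 else 0)
        (bidiagonal fun j => w (Fin.natAdd a j)) := by
  ext (i | i) (j | j) <;> simp [bidiagonal, Fin.ext_iff] <;> grind

theorem rank_kroneckerPencil_bidiagonal_append {m n : Type*} [Fintype m] [DecidableEq m]
    [Fintype n] [DecidableEq n] {a b : ℕ} (w : Fin (a + b) → K) (z : K)
    (hz : ∀ i, w (Fin.castAdd b i) = z) (hne : ∀ j, w (Fin.natAdd a j) ≠ z)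
    (A B : Matrix m n K) :
    (kroneckerPencil (bidiagonal w) A B).rank =
      (kroneckerPencil (bidiagonal fun _ : Fin a => z) A B).rank +
        (kroneckerPencil (bidiagonal fun j => w (Fin.natAdd a j)) A B).rank := by
  have hnil : IsNilpotent (bidiagonal (fun _ : Fin a => z) - z • 1) := by
    rw [bidiagonal_sub_smul_one]
    simp only [sub_self]
    exact isNilpotent_bidiagonal_zero a
  have hunit : IsUnit (bidiagonal (fun j => w (Fin.natAdd a j)) - z • 1).det := by
    simpa [bidiagonal_sub_smul_one, det_bidiagonal, Finset.prod_ne_zero_iff, sub_eq_zero]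
      using hne
  obtain ⟨X, hX⟩ := exists_mul_sub_mul_eq_of_isNilpotent_sub z hnil hunit
    (of fun (j : Fin b) (i : Fin a) => if (j : ℕ) = 0 ∧ (i : ℕ) + 1 = a then 1 else 0)
  rw [← rank_kroneckerPencil_submatrix _ _ _ finSumFinEquiv, bidiagonal_submatrix_finSumFinEquiv]
  simp only [hz]
  exact rank_kroneckerPencil_fromBlocks_of_sylvester hX A B

end Bidiagonal

section Runs

theorem Fin.mem_iff_lt_card_of_isLowerSet {k : ℕ} {s : Finset (Fin k)}
    (hs : IsLowerSet (s : Set (Fin k))) (i : Fin k) : i ∈ s ↔ (i : ℕ) < s.card := by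
  constructor
  · intro hi
    have := Finset.card_le_card
      (show Finset.Iic i ⊆ s from fun j hj => hs (Finset.mem_Iic.mp hj) hi)
    rw [Fin.card_Iic] at this
    omega
  · intro hi
    by_contra hni
    have := Finset.card_le_card (show s ⊆ Finset.Iio i from fun j hj =>
      Finset.mem_Iio.mpr (lt_of_not_ge fun hij => hni (hs hij hj)))
    rw [Fin.card_Iio] at this
    omega

variable {α : Type*}

def HasOrdConnectedFibers {k : ℕ} (w : Fin k → α) : Prop :=
  ∀ t u r : Fin k, w t = w u → t ≤ r → r ≤ u → w r = w t

theorem HasOrdConnectedFibers.comp_monotone {k k' : ℕ} {w : Fin k → α}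
    (hw : HasOrdConnectedFibers w) {f : Fin k' → Fin k} (hf : Monotone f) :
    HasOrdConnectedFibers (w ∘ f) :=
  fun t u r htu htr hru => hw (f t) (f u) (f r) htu (hf htr) (hf hru)

theorem HasOrdConnectedFibers.exists_initial_run {k : ℕ} {w : Fin k → α}
    (hw : HasOrdConnectedFibers w) (hk : 0 < k) :
    ∃ a b, ∃ _ : a + b = k, 0 < a ∧ ∀ i : Fin k, w i = w ⟨0, hk⟩ ↔ (i : ℕ) < a := by
  classical
  set s := Finset.univ.filter fun i => w i = w ⟨0, hk⟩
  have hs : IsLowerSet (s : Set (Fin k)) := fun i j hji hi => by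
    simp only [s, Finset.mem_coe, Finset.mem_filter] at hi ⊢
    exact ⟨Finset.mem_univ _, hw _ _ _ hi.2.symm (Nat.zero_le _) hji⟩
  have hmem := Fin.mem_iff_lt_card_of_isLowerSet hs
  have hle : s.card ≤ k := by simpa using Finset.card_le_univ s
  refine ⟨s.card, k - s.card, by omega, ?_, fun i => ?_⟩
  · exact (hmem ⟨0, hk⟩).mp (by simp [s])
  · rw [← hmem]
    simp [s]

theorem sum_image_card_fiber_append {M : Type*} [DecidableEq α] [AddCommMonoid M] {a b : ℕ}
    (w : Fin (a + b) → α) (z : α) (ha : 0 < a) (hz : ∀ i, w (Fin.castAdd b i) = z)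
    (hne : ∀ j, w (Fin.natAdd a j) ≠ z) (F : α → ℕ → M) :
    ∑ l ∈ Finset.univ.image w, F l (Finset.univ.filter fun t => w t = l).card =
      F z a + ∑ l ∈ Finset.univ.image (fun j => w (Fin.natAdd a j)),
        F l (Finset.univ.filter fun j => w (Fin.natAdd a j) = l).card := by
  have hcard : ∀ l, (Finset.univ.filter fun t => w t = l).card =
      (Finset.univ.filter fun i => w (Fin.castAdd b i) = l).card +
        (Finset.univ.filter fun j => w (Fin.natAdd a j) = l).card := by
    intro l
    simp only [Finset.card_filter, Fin.sum_univ_add]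
  have himage : Finset.univ.image w =
      insert z (Finset.univ.image fun j => w (Fin.natAdd a j)) := by
    ext l
    simp only [Finset.mem_image, Finset.mem_univ, true_and, Finset.mem_insert]
    constructor
    · rintro ⟨t, rfl⟩
      induction t using Fin.addCases with
      | left i => exact Or.inl (hz i)
      | right j => exact Or.inr ⟨j, rfl⟩
    · rintro (rfl | ⟨j, rfl⟩)
      exacts [⟨_, hz ⟨0, ha⟩⟩, ⟨_, rfl⟩]
  rw [himage, Finset.sum_insert (by simpa using fun j => hne j), hcard]
  congr 1
  · simp [hz, hne]
  · refine Finset.sum_congr rfl fun l hl => ?_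
    obtain ⟨j, -, rfl⟩ := Finset.mem_image.mp hl
    rw [hcard]
    simp [hz, Ne.symm (hne j)]

end Runs

theorem rank_kroneckerPencil_bidiagonal {K : Type*} [Field K] [DecidableEq K] {m n : Type*}
    [Fintype m] [DecidableEq m] [Fintype n] [DecidableEq n] {k : ℕ} (w : Fin k → K)
    (hw : HasOrdConnectedFibers w) (A B : Matrix m n K) :
    (kroneckerPencil (bidiagonal w) A B).rank =
      ∑ l ∈ Finset.univ.image w, (kroneckerPencil
        (bidiagonal fun _ : Fin (Finset.univ.filter fun t => w t = l).card => l) A B).rank := by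
  induction k using Nat.strong_induction_on with
  | _ k ih =>
  rcases Nat.eq_zero_or_pos k with rfl | hk
  · simpa using rank_le_card_width (kroneckerPencil (bidiagonal w) A B)
  obtain ⟨a, b, rfl, ha, hrun⟩ := hw.exists_initial_run hk
  have hz : ∀ i, w (Fin.castAdd b i) = w ⟨0, hk⟩ := fun i => (hrun _).mpr i.isLt
  have hne : ∀ j, w (Fin.natAdd a j) ≠ w ⟨0, hk⟩ := fun j h => by simpa using (hrun _).mp h
  rw [rank_kroneckerPencil_bidiagonal_append w _ hz hne,
    ih b (by omega) (fun j => w (Fin.natAdd a j))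
      (hw.comp_monotone (Fin.strictMono_natAdd a).monotone),
    sum_image_card_fiber_append w _ ha hz hne
      fun l d => (kroneckerPencil (bidiagonal fun _ : Fin d => l) A B).rank]

theorem pencilBlockMat_eq_kroneckerPencil {m n : ℕ} (A B : Matrix (Fin m) (Fin n) ℂ) (μ : ℂ)
    (d : ℕ) : pencilBlockMat A B μ d = kroneckerPencil (bidiagonal fun _ : Fin d => μ) A B := by
  ext ⟨i, x⟩ ⟨j, y⟩
  by_cases h : i = j <;> simp [pencilBlockMat, kroneckerPencil, bidiagonal, one_apply, h]

theorem rank_coupled_pencil_block_general (m n D : ℕ)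
    (A B : Matrix (Fin m) (Fin n) ℂ) (ν : Fin D → ℂ)
    (hconsec : ∀ t u r : Fin D, ν t = ν u → t ≤ r → r ≤ u → ν r = ν t) :
    (Matrix.rank (fun p q =>
        if p.1 = q.1 then (ν p.1 • B + A) p.2 q.2
        else if (p.1 : ℕ) = (q.1 : ℕ) + 1 then B p.2 q.2 else 0 :
      Matrix (Fin D × Fin m) (Fin D × Fin n) ℂ))
      = ∑ l ∈ Finset.image ν Finset.univ,
          (pencilBlockMat A B l ((Finset.univ.filter (fun t : Fin D => ν t = l)).card)).rank := by
  have hT : (fun p q =>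
        if p.1 = q.1 then (ν p.1 • B + A) p.2 q.2
        else if (p.1 : ℕ) = (q.1 : ℕ) + 1 then B p.2 q.2 else 0 :
      Matrix (Fin D × Fin m) (Fin D × Fin n) ℂ) = kroneckerPencil (bidiagonal ν) A B := by
    ext ⟨i, x⟩ ⟨j, y⟩
    by_cases h : i = j <;> simp [kroneckerPencil, bidiagonal, one_apply, h]
  simp only [hT, rank_kroneckerPencil_bidiagonal ν hconsec, pencilBlockMat_eq_kroneckerPencil]

/-- Block-diagonalization of the coupled matrix `P^{d₁,…,d_s}_{λ₁,…,λ_s}(L)`: if the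
values `ν₁, …, ν_D` are listed with equal values in consecutive positions, then the block
matrix `T` with diagonal blocks `ν_t B + A` and subdiagonal blocks `B` has rank equal to
the sum, over the distinct values `λ` of the sequence, of the ranks of `P_λ^{c_λ}(L)`,
where `c_λ` is the number of occurrences of `λ`. -/
theorem rank_coupled_pencil_block (m n D : ℕ) (hD : 1 ≤ D)
    (A B : Matrix (Fin m) (Fin n) ℂ) (ν : Fin D → ℂ)
    (hconsec : ∀ t u r : Fin D, ν t = ν u → t ≤ r → r ≤ u → ν r = ν t) :
    (Matrix.rank (fun p q =>
        if p.1 = q.1 then (ν p.1 • B + A) p.2 q.2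
        else if (p.1 : ℕ) = (q.1 : ℕ) + 1 then B p.2 q.2 else 0 :
      Matrix (Fin D × Fin m) (Fin D × Fin n) ℂ))
      = ∑ l ∈ Finset.image ν Finset.univ,
          (pencilBlockMat A B l ((Finset.univ.filter (fun t : Fin D => ν t = l)).card)).rank :=
  rank_coupled_pencil_block_general m n D A B ν hconsec
end

section
/- Let A be an n×n complex matrix, μ ∈ ℂ, and d ≥ 1. Let T be the dn × dn block matrix, with d×d blocks of size n×n, whose (i,i) blocks equal μI_n − A, whose (i+1,i) blocks equal I_n, and all of whose other blocks are zero. Then rank(T) = (d−1)·n + rank((μI_n − A)^d); equivalently, the nullity of T equals the dimension of the kernel of (μI_n − A)^d. -/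
open Matrix

namespace PencilAux

variable {n d : ℕ}

def Tmat (d n : ℕ) (B : Matrix (Fin n) (Fin n) ℂ) :
    Matrix (Fin d × Fin n) (Fin d × Fin n) ℂ := fun p q =>
  if p.1 = q.1 then B p.2 q.2
  else if (p.1 : ℕ) = (q.1 : ℕ) + 1 then (1 : Matrix (Fin n) (Fin n) ℂ) p.2 q.2 else 0

lemma row_formula (B : Matrix (Fin n) (Fin n) ℂ) (x : Fin d × Fin n → ℂ)
    (i : Fin d) (a : Fin n) :
    (Tmat d n B).mulVec x (i, a)
      = B.mulVec (fun b => x (i, b)) a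
        + (if h : 0 < (i : ℕ) then x (⟨(i : ℕ) - 1, by omega⟩, a) else 0) := by
  classical
  simp only [Tmat, Matrix.mulVec, dotProduct]
  rw [Fintype.sum_prod_type]
  have key : ∀ j : Fin d,
      (∑ b, (if i = j then B a b
          else if (i : ℕ) = (j : ℕ) + 1 then (1 : Matrix (Fin n) (Fin n) ℂ) a b else 0) * x (j, b))
        = (if i = j then ∑ b, B a b * x (j, b) else 0)
          + (if (i : ℕ) = (j : ℕ) + 1 then x (j, a) else 0) := by
    intro j
    by_cases h : i = j
    · subst h
      simp
    · by_cases h2 : (i : ℕ) = (j : ℕ) + 1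
      · simp [h, h2, Matrix.one_apply, ite_mul]
      · simp [h, h2]
  rw [Finset.sum_congr rfl (fun j _ => key j), Finset.sum_add_distrib]
  congr 1
  · rw [Finset.sum_ite_eq]
    simp
  · by_cases h : 0 < (i : ℕ)
    · rw [dif_pos h]
      have : ∀ j : Fin d, ((i : ℕ) = (j : ℕ) + 1) ↔ (j = ⟨(i : ℕ) - 1, by omega⟩) := by
        intro j
        constructor
        · intro hj; ext; simp; omega
        · intro hj; subst hj; simp; omega
      rw [Finset.sum_congr rfl (fun j _ => by rw [if_congr (this j) rfl rfl])]
      rw [Finset.sum_ite_eq']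
      simp
    · rw [dif_neg h]
      apply Finset.sum_eq_zero
      intro j _
      rw [if_neg]
      omega

/-- The block rows of a kernel element, as a recurrence. -/
lemma ker_rows (B : Matrix (Fin n) (Fin n) ℂ) {x : Fin d × Fin n → ℂ}
    (hx : (Tmat d n B).mulVec x = 0) (i : Fin d) :
    B.mulVec (fun b => x (i, b))
      = (if h : 0 < (i : ℕ) then -(fun a => x (⟨(i : ℕ) - 1, by omega⟩, a)) else 0) := by
  funext a
  have := congrFun hx (i, a)
  rw [row_formula] at this
  by_cases h : 0 < (i : ℕ)
  · rw [dif_pos h] at this ⊢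
    simp only [Pi.neg_apply]
    exact eq_neg_of_add_eq_zero_left this
  · rw [dif_neg h] at this ⊢
    simpa using this

lemma ker_induct (hd : 0 < d) (B : Matrix (Fin n) (Fin n) ℂ) {x : Fin d × Fin n → ℂ}
    (hx : (Tmat d n B).mulVec x = 0) :
    ∀ k, k ≤ d - 1 →
      ((-B) ^ k).mulVec (fun b => x (⟨d - 1, by omega⟩, b))
        = fun b => x (⟨d - 1 - k, by omega⟩, b) := by
  intro k
  induction k with
  | zero => intro _; simp
  | succ k ih =>
    intro hk
    have hk' : k ≤ d - 1 := by omega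
    rw [pow_succ', ← Matrix.mulVec_mulVec, ih hk']
    have hpos : 0 < ((⟨d - 1 - k, by omega⟩ : Fin d) : ℕ) := by simp; omega
    have := ker_rows B hx ⟨d - 1 - k, by omega⟩
    rw [dif_pos hpos] at this
    rw [Matrix.neg_mulVec, this]
    simp only [neg_neg]
    congr 1

/-- Forward: kernel of T maps to kernel of B^d via the last block row. -/
lemma last_row_in_ker (hd : 0 < d) (B : Matrix (Fin n) (Fin n) ℂ) {x : Fin d × Fin n → ℂ}
    (hx : (Tmat d n B).mulVec x = 0) :
    (B ^ d).mulVec (fun b => x (⟨d - 1, by omega⟩, b)) = 0 := by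
  have h1 := ker_induct hd B hx (d - 1) le_rfl
  have h0 : B.mulVec (fun b => x (⟨0, hd⟩, b)) = 0 := by
    have := ker_rows B hx ⟨0, hd⟩
    simpa using this
  have : (B * (-B) ^ (d - 1)).mulVec (fun b => x (⟨d - 1, by omega⟩, b)) = 0 := by
    rw [← Matrix.mulVec_mulVec, h1]
    simpa using h0
  have hfact : B * (-B) ^ (d - 1) = ((-1 : ℂ) ^ (d - 1)) • (B ^ d) := by
    have hnb : (-B) = ((-1 : ℂ)) • B := by simp
    rw [hnb, smul_pow, mul_smul_comm, ← pow_succ']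
    congr 2
    omega
  rw [hfact, Matrix.smul_mulVec, smul_eq_zero] at this
  rcases this with h | h
  · exact absurd h (by simp [pow_ne_zero])
  · exact h



lemma neg_pow_fact (hd : 0 < d) (B : Matrix (Fin n) (Fin n) ℂ) :
    B * (-B) ^ (d - 1) = ((-1 : ℂ) ^ (d - 1)) • (B ^ d) := by
  have hnb : (-B) = ((-1 : ℂ)) • B := by simp
  rw [hnb, smul_pow, mul_smul_comm, ← pow_succ']
  congr 2
  omega

lemma g_in_ker (hd : 0 < d) (B : Matrix (Fin n) (Fin n) ℂ) {y : Fin n → ℂ}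
    (hy : (B ^ d).mulVec y = 0) :
    (Tmat d n B).mulVec (fun p => ((-B) ^ (d - 1 - (p.1 : ℕ))).mulVec y p.2) = 0 := by
  funext p
  obtain ⟨i, a⟩ := p
  rw [row_formula]
  simp only [Pi.zero_apply]
  by_cases h : 0 < (i : ℕ)
  · rw [dif_pos h]
    have hk : d - 1 - ((i : ℕ) - 1) = (d - 1 - (i : ℕ)) + 1 := by omega
    show B.mulVec (((-B) ^ (d - 1 - (i : ℕ))).mulVec y) a
        + ((-B) ^ (d - 1 - ((i : ℕ) - 1))).mulVec y a = 0
    rw [hk, pow_succ', ← Matrix.mulVec_mulVec, Matrix.neg_mulVec]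
    simp
  · rw [dif_neg h]
    have h0 : (i : ℕ) = 0 := by omega
    show B.mulVec (((-B) ^ (d - 1 - (i : ℕ))).mulVec y) a + 0 = 0
    rw [h0, Matrix.mulVec_mulVec, Nat.sub_zero, neg_pow_fact hd B,
      Matrix.smul_mulVec, hy]
    simp

lemma ker_finrank_eq (hd : 0 < d) (B : Matrix (Fin n) (Fin n) ℂ) :
    Module.finrank ℂ (LinearMap.ker (Tmat d n B).mulVecLin)
      = Module.finrank ℂ (LinearMap.ker (B ^ d).mulVecLin) := by
  classical
  let π : ((Fin d × Fin n) → ℂ) →ₗ[ℂ] (Fin n → ℂ) :=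
    LinearMap.funLeft ℂ ℂ (fun b => (⟨d - 1, by omega⟩, b))
  let g : (Fin n → ℂ) →ₗ[ℂ] ((Fin d × Fin n) → ℂ) :=
    { toFun := fun y p => ((-B) ^ (d - 1 - (p.1 : ℕ))).mulVec y p.2
      map_add' := fun y z => by funext p; simp [Matrix.mulVec_add]
      map_smul' := fun c y => by funext p; simp [Matrix.mulVec_smul] }
  have hπ : ∀ x ∈ LinearMap.ker (Tmat d n B).mulVecLin,
      π x ∈ LinearMap.ker (B ^ d).mulVecLin := by
    intro x hx
    rw [LinearMap.mem_ker, Matrix.mulVecLin_apply] at hx ⊢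
    exact last_row_in_ker hd B hx
  have hg : ∀ y ∈ LinearMap.ker (B ^ d).mulVecLin,
      g y ∈ LinearMap.ker (Tmat d n B).mulVecLin := by
    intro y hy
    rw [LinearMap.mem_ker, Matrix.mulVecLin_apply] at hy ⊢
    exact g_in_ker hd B hy
  refine LinearEquiv.finrank_eq
    (LinearEquiv.ofLinear (π.restrict hπ) (g.restrict hg) ?_ ?_)
  · apply LinearMap.ext
    rintro ⟨y, hy⟩
    apply Subtype.ext
    funext b
    show ((-B) ^ (d - 1 - ((⟨d - 1, by omega⟩ : Fin d) : ℕ))).mulVec y b = y b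
    simp
  · apply LinearMap.ext
    rintro ⟨x, hx⟩
    apply Subtype.ext
    funext p
    obtain ⟨i, a⟩ := p
    rw [LinearMap.mem_ker, Matrix.mulVecLin_apply] at hx
    show ((-B) ^ (d - 1 - (i : ℕ))).mulVec (fun b => x (⟨d - 1, by omega⟩, b)) a = x (i, a)
    have h2 := congrFun (ker_induct hd B hx (d - 1 - (i : ℕ)) (by omega)) a
    rw [h2]
    congr 2
    ext
    simp
    omega

end PencilAux

/-- Rank formula for the block matrix `P_μ^d(λI − A)`: the `dn × dn` block matrix `T` with
diagonal blocks `μI − A` and first-subdiagonal blocks `I` satisfies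
`rank T = (d−1)·n + rank((μI − A)^d)`; equivalently, the nullity of `T` equals
`dim ker((μI − A)^d)`. -/
theorem rank_pencilBlockMat_similarity (n : ℕ) (hn : 1 ≤ n)
    (A : Matrix (Fin n) (Fin n) ℂ) (μ : ℂ) (d : ℕ) (hd : 1 ≤ d) :
    (Matrix.rank (fun p q =>
        if p.1 = q.1 then (μ • (1 : Matrix (Fin n) (Fin n) ℂ) - A) p.2 q.2
        else if (p.1 : ℕ) = (q.1 : ℕ) + 1 then (1 : Matrix (Fin n) (Fin n) ℂ) p.2 q.2 else 0 :
      Matrix (Fin d × Fin n) (Fin d × Fin n) ℂ))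
      = (d - 1) * n + ((μ • (1 : Matrix (Fin n) (Fin n) ℂ) - A) ^ d).rank := by
  set B := μ • (1 : Matrix (Fin n) (Fin n) ℂ) - A with hB
  show (PencilAux.Tmat d n B).rank = (d - 1) * n + (B ^ d).rank
  have h1 := LinearMap.finrank_range_add_finrank_ker (PencilAux.Tmat d n B).mulVecLin
  have h2 := LinearMap.finrank_range_add_finrank_ker (B ^ d).mulVecLin
  rw [Module.finrank_fintype_fun_eq_card, Fintype.card_prod, Fintype.card_fin,
    Fintype.card_fin] at h1
  rw [Module.finrank_fintype_fun_eq_card, Fintype.card_fin] at h2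
  rw [PencilAux.ker_finrank_eq hd B] at h1
  set K := Module.finrank ℂ (LinearMap.ker (B ^ d).mulVecLin) with hK
  have hrT : (PencilAux.Tmat d n B).rank + K = d * n := h1
  have hrP : (B ^ d).rank + K = n := h2
  have hKn : K ≤ n := by omega
  have hdn : (d - 1) * n + n = d * n := by
    cases d with
    | zero => omega
    | succ e => simp [Nat.succ_sub_one, Nat.succ_mul]
  have key : (PencilAux.Tmat d n B).rank + K = (d - 1) * n + (B ^ d).rank + K := by
    rw [hrT, ← hdn, add_assoc, hrP]
  exact Nat.add_right_cancel key
end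

section
/- Let k ≥ 0 and let R_k(λ) = λB + A be the k×(k+1) right singular pencil, where B is the k×(k+1) complex matrix with (B)_{i,i} = 1 and zeros elsewhere, and A is the k×(k+1) complex matrix with (A)_{i,i+1} = 1 and zeros elsewhere. Then for every μ ∈ ℂ and every d ≥ 1, the matrix P_μ^d(R_k) has full row rank dk; equivalently, its nullity equals d. -/
/-- The `λ`-coefficient of the right singular block `R_k(λ)`: ones in positions `(i,i)`. -/
def rightSingB (k : ℕ) : Matrix (Fin k) (Fin (k + 1)) ℂ :=
  fun i j => if (j : ℕ) = (i : ℕ) then 1 else 0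

/-- The constant coefficient of `R_k(λ)`: ones in positions `(i,i+1)`. -/
def rightSingA (k : ℕ) : Matrix (Fin k) (Fin (k + 1)) ℂ :=
  fun i j => if (j : ℕ) = (i : ℕ) + 1 then 1 else 0

/-- For the right singular pencil `R_k(λ)`, the matrix `P_μ^d(R_k)` has full row rank `dk`
for every `μ ∈ ℂ` and `d ≥ 1`. -/
theorem rank_pencilBlockMat_rightSing (k : ℕ) (μ : ℂ) (d : ℕ) (hd : 1 ≤ d) :
    (pencilBlockMat (rightSingA k) (rightSingB k) μ d).rank = d * k := by
  set P := pencilBlockMat (rightSingA k) (rightSingB k) μ d with hP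
  have hcard : Fintype.card (Fin d × Fin k) = d * k := by simp
  -- column selection
  set g : Fin d × Fin k → Fin d × Fin (k + 1) := fun p => (p.1, p.2.succ) with hg
  set M : Matrix (Fin d × Fin k) (Fin d × Fin k) ℂ := P.submatrix id g with hM
  -- the square submatrix is lower triangular with unit diagonal after reindexing
  have hMzero : ∀ p q : Fin d × Fin k,
      (p.2 : ℕ) + k * p.1 < (q.2 : ℕ) + k * q.1 → M p q = 0 := by
    intro p q hlt
    have hq2 := q.2.isLt
    simp only [hM, hP, Matrix.submatrix_apply, id_eq, hg, pencilBlockMat, rightSingA,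
      rightSingB, Matrix.add_apply, Matrix.smul_apply, Fin.val_succ, smul_eq_mul]
    rcases eq_or_ne p.1 q.1 with h1 | h1
    · have h1' : k * (p.1 : ℕ) = k * (q.1 : ℕ) := by rw [h1]
      have hpq : (p.2 : ℕ) < q.2 := by omega
      rw [if_pos h1, if_neg (by omega), if_neg (by omega)]
      ring
    · rw [if_neg h1]
      rcases eq_or_ne (p.1 : ℕ) ((q.1 : ℕ) + 1) with h2 | h2
      · have h2' : k * (p.1 : ℕ) = k * (q.1 : ℕ) + k := by rw [h2]; ring
        omega
      · rw [if_neg h2]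
  have hMdiag : ∀ p : Fin d × Fin k, M p p = 1 := by
    intro p
    simp only [hM, hP, Matrix.submatrix_apply, id_eq, hg, pencilBlockMat, rightSingA,
      rightSingB, Matrix.add_apply, Matrix.smul_apply, Fin.val_succ, smul_eq_mul]
    simp
  have hdet : M.det = 1 := by
    set e : Fin d × Fin k ≃ Fin (d * k) := finProdFinEquiv with he
    have : (M.submatrix e.symm e.symm).det = M.det :=
      Matrix.det_submatrix_equiv_self e.symm M
    rw [← this]
    rw [Matrix.det_of_lowerTriangular]
    · rw [Finset.prod_eq_one]
      intro i _
      simp only [Matrix.submatrix_apply]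
      exact hMdiag _
    · intro i j hij
      simp only [Matrix.submatrix_apply]
      apply hMzero
      have h1 : ((e (e.symm i) : Fin (d * k)) : ℕ) < ((e (e.symm j) : Fin (d*k)) : ℕ) := by
        simp only [Equiv.apply_symm_apply]
        exact hij
      simpa [he, finProdFinEquiv] using h1
  have hMunit : IsUnit M := by
    rw [Matrix.isUnit_iff_isUnit_det, hdet]
    exact isUnit_one
  have hMrank : M.rank = d * k := by
    rw [Matrix.rank_of_isUnit M hMunit, hcard]
  -- rank M ≤ rank P
  have key : ∀ v : Fin d × Fin k → ℂ,
      P.mulVec (fun c => ∑ q, if g q = c then v q else 0) = M.mulVec v := by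
    intro v
    ext p
    simp only [Matrix.mulVec, dotProduct, Finset.mul_sum, mul_ite, mul_zero]
    rw [Finset.sum_comm]
    refine Finset.sum_congr rfl fun q _ => ?_
    rw [Finset.sum_ite_eq Finset.univ (g q) (fun c => P p c * v q)]
    simp [hM]
  have hle : LinearMap.range M.mulVecLin ≤ LinearMap.range P.mulVecLin := by
    rintro x ⟨v, rfl⟩
    exact ⟨_, key v⟩
  have h1 : M.rank ≤ P.rank := Submodule.finrank_mono hle
  have h2 : P.rank ≤ d * k := le_trans P.rank_le_card_height (le_of_eq (by simp))
  omega
end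

section
/- Let k ≥ 0 and let R_k(λ)ᵀ = λBᵀ + Aᵀ be the (k+1)×k left singular pencil, where B is the k×(k+1) complex matrix with (B)_{i,i} = 1 and zeros elsewhere, and A is the k×(k+1) complex matrix with (A)_{i,i+1} = 1 and zeros elsewhere. Then for every μ ∈ ℂ and every d ≥ 1, the matrix P_μ^d(R_kᵀ) has full column rank dk; equivalently, its nullity equals 0. -/
lemma sum_ite_pt {n : ℕ} (f : Fin n → ℂ) (v : ℕ) :
    (∑ j : Fin n, if v = (j : ℕ) then f j else 0) = if h : v < n then f ⟨v, h⟩ else 0 := by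
  split
  · rename_i h
    rw [Finset.sum_eq_single (⟨v, h⟩ : Fin n)]
    · simp
    · intro b _ hb
      rw [if_neg]
      intro hv; exact hb (Fin.ext hv.symm)
    · simp
  · rename_i h
    apply Finset.sum_eq_zero
    intro b _
    rw [if_neg]
    intro hv; exact h (hv ▸ b.isLt)

lemma sum_ite_succ {n : ℕ} (f : Fin n → ℂ) (v : ℕ) :
    (∑ q : Fin n, if v = (q : ℕ) + 1 then f q else 0) =
      if h : v - 1 < n ∧ 1 ≤ v then f ⟨v - 1, h.1⟩ else 0 := by
  split
  · rename_i h
    rw [Finset.sum_eq_single (⟨v - 1, h.1⟩ : Fin n)]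
    · rw [if_pos (show v = v - 1 + 1 by omega)]
    · intro b _ hb
      rw [if_neg]
      intro hv
      exact hb (Fin.ext (show (b : ℕ) = v - 1 by omega))
    · simp
  · rename_i h
    apply Finset.sum_eq_zero
    intro b _
    rw [if_neg]
    intro hv
    exact h ⟨by omega, by omega⟩

/-- For the left singular pencil `R_k(λ)ᵀ = λBᵀ + Aᵀ`, the matrix `P_μ^d(R_kᵀ)` has full
column rank `dk` (equivalently, nullity `0`) for every `μ ∈ ℂ` and `d ≥ 1`. -/
theorem rank_pencilBlockMat_leftSing (k : ℕ) (μ : ℂ) (d : ℕ) (hd : 1 ≤ d) :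
    (pencilBlockMat (rightSingA k).transpose (rightSingB k).transpose μ d).rank = d * k := by
  set M := pencilBlockMat (rightSingA k).transpose (rightSingB k).transpose μ d with hM
  have key : ∀ x : Fin d × Fin k → ℂ, M.mulVec x = 0 → x = 0 := by
    intro x hx
    have hrow : ∀ (p : Fin d) (i : Fin (k + 1)),
        μ * (if h : (i : ℕ) < k then x (p, ⟨i, h⟩) else 0)
        + (if h : (i : ℕ) - 1 < k ∧ 1 ≤ (i : ℕ) then x (p, ⟨(i : ℕ) - 1, h.1⟩) else 0)
        + (if hp : (p : ℕ) - 1 < d ∧ 1 ≤ (p : ℕ) then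
            (if h : (i : ℕ) < k then x (⟨(p : ℕ) - 1, hp.1⟩, ⟨i, h⟩) else 0) else 0) = 0 := by
      intro p i
      have h0 := congrFun hx (p, i)
      rw [Matrix.mulVec, dotProduct, Fintype.sum_prod_type, Pi.zero_apply] at h0
      have entry : ∀ (q : Fin d) (j : Fin k),
          M (p, i) (q, j) * x (q, j) =
          (if p = q then
            (μ * (if (i : ℕ) = (j : ℕ) then x (q, j) else 0)
              + (if (i : ℕ) = (j : ℕ) + 1 then x (q, j) else 0)) else 0)
          + (if (p : ℕ) = (q : ℕ) + 1 then (if (i : ℕ) = (j : ℕ) then x (q, j) else 0) else 0) := by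
        intro q j
        simp only [hM, pencilBlockMat, rightSingA, rightSingB, Matrix.transpose_apply,
          Matrix.add_apply, Matrix.smul_apply, smul_eq_mul]
        rcases eq_or_ne p q with h | h
        · subst h
          rw [if_pos rfl, if_pos rfl,
            if_neg (show ¬((p : ℕ) = (p : ℕ) + 1) by omega)]
          split_ifs <;> ring
        · rw [if_neg h]
          split_ifs <;> ring
      simp only [entry] at h0
      simp only [Finset.sum_add_distrib] at h0
      have pull1 : ∀ q : Fin d, (∑ j : Fin k,
          ((if p = q then
            (μ * (if (i : ℕ) = (j : ℕ) then x (q, j) else 0)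
              + (if (i : ℕ) = (j : ℕ) + 1 then x (q, j) else 0)) else 0))) =
          if p = q then
            (μ * (∑ j : Fin k, if (i : ℕ) = (j : ℕ) then x (q, j) else 0)
              + (∑ j : Fin k, if (i : ℕ) = (j : ℕ) + 1 then x (q, j) else 0)) else 0 := by
        intro q
        split
        · rw [Finset.sum_add_distrib, Finset.mul_sum]
        · simp
      have pull2 : ∀ q : Fin d, (∑ j : Fin k,
          (if (p : ℕ) = (q : ℕ) + 1 then (if (i : ℕ) = (j : ℕ) then x (q, j) else 0) else 0)) =
          if (p : ℕ) = (q : ℕ) + 1 then (∑ j : Fin k, if (i : ℕ) = (j : ℕ) then x (q, j) else 0)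
          else 0 := by
        intro q; split
        · rfl
        · simp
      simp only [pull1, pull2] at h0
      rw [Finset.sum_ite_eq, if_pos (Finset.mem_univ p)] at h0
      rw [sum_ite_succ (fun q => ∑ j : Fin k, if (i : ℕ) = (j : ℕ) then x (q, j) else 0)] at h0
      rw [sum_ite_succ (fun j => x (p, j)) (i : ℕ)] at h0
      simp only [sum_ite_pt] at h0
      convert h0 using 3
    have hrow' : ∀ (p : Fin d) (v : ℕ) (hv : v < k + 1),
        μ * (if h : v < k then x (p, ⟨v, h⟩) else 0)
        + (if h : v - 1 < k ∧ 1 ≤ v then x (p, ⟨v - 1, h.1⟩) else 0)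
        + (if hp : (p : ℕ) - 1 < d ∧ 1 ≤ (p : ℕ) then
            (if h : v < k then x (⟨(p : ℕ) - 1, hp.1⟩, ⟨v, h⟩) else 0) else 0) = 0 :=
      fun p v hv => hrow p ⟨v, hv⟩
    have main : ∀ t : ℕ, ∀ (j : Fin k) (p : Fin d), (j : ℕ) + 1 + t = k → x (p, j) = 0 := by
      intro t
      induction t with
      | zero =>
        intro j p hj
        have h1 := hrow' p ((j : ℕ) + 1) (by omega)
        rw [dif_neg (show ¬((j : ℕ) + 1 < k) by omega),
          dif_pos (show (j : ℕ) + 1 - 1 < k ∧ 1 ≤ (j : ℕ) + 1 by omega)] at h1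
        simp only [Nat.add_sub_cancel, Fin.eta, mul_zero, zero_add] at h1
        by_cases hp : (p : ℕ) - 1 < d ∧ 1 ≤ (p : ℕ)
        · rw [dif_pos hp, dif_neg (show ¬((j : ℕ) + 1 < k) by omega)] at h1
          simpa using h1
        · rw [dif_neg hp] at h1
          simpa using h1
      | succ t ih =>
        intro j p hj
        have h1 := hrow' p ((j : ℕ) + 1) (by omega)
        have hlt : (j : ℕ) + 1 < k := by omega
        rw [dif_pos hlt,
          dif_pos (show (j : ℕ) + 1 - 1 < k ∧ 1 ≤ (j : ℕ) + 1 by omega)] at h1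
        simp only [Nat.add_sub_cancel, Fin.eta] at h1
        rw [ih ⟨(j : ℕ) + 1, hlt⟩ p (by simp; omega), mul_zero, zero_add] at h1
        by_cases hp : (p : ℕ) - 1 < d ∧ 1 ≤ (p : ℕ)
        · rw [dif_pos hp, dif_pos hlt,
            ih ⟨(j : ℕ) + 1, hlt⟩ ⟨(p : ℕ) - 1, hp.1⟩ (by simp; omega)] at h1
          simpa using h1
        · rw [dif_neg hp] at h1
          simpa using h1
    funext pj
    exact main (k - (pj.2 : ℕ) - 1) pj.2 pj.1 (by omega)
  have hinj : Function.Injective M.mulVecLin := by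
    rw [← LinearMap.ker_eq_bot, LinearMap.ker_eq_bot']
    intro x hx
    exact key x hx
  rw [Matrix.rank, LinearMap.finrank_range_of_inj hinj]
  simp [Module.finrank_fintype_fun_eq_card]
end

section
/- Let Ĵ be the 3×3 complex matrix with −2 on the diagonal, 1 on the superdiagonal, and zeros elsewhere (so that λI₃ + Ĵ is a pencil whose only eigenvalue is 2 with a single Jordan block of size 3). For a ∈ ℂ, let D_a be the 3×3 complex matrix with rows (−a, 0, 0), (0, −2, 1), (0, 0, −2). Then the pair (I₃, Ĵ) belongs to the closure, in the space of pairs of 3×3 complex matrices with the standard topology, of the set { (P·Q, P·D_a·Q) : a ∈ ℂ, a ≠ 2, P and Q invertible 3×3 complex matrices }. -/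
open Filter Topology Matrix

/-!
Moving the `(1,1)` entry of `Ĵ` from `-2` to `-2 - ε` splits off the simple eigenvalue `2 + ε`:
for `ε ≠ 0` the matrix `jordanSplitting ε` (of determinant `ε²`) conjugates `D_{2+ε}` to this
perturbation `J_ε`, so `(I₃, J_ε)` lies in the orbit of `(I₃, D_{2+ε})`. Letting `ε → 0` puts
`(I₃, Ĵ)` in the closure.
-/

section StrictEquivalence

variable {n R : Type*} [Fintype n] [DecidableEq n] [CommRing R]

theorem exists_strictEquiv_one_of_mul_eq_mul {P D M : Matrix n n R} (hP : IsUnit P)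
    (h : P * D = M * P) :
    ∃ P' Q : Matrix n n R, IsUnit P' ∧ IsUnit Q ∧ ((1 : Matrix n n R), M) = (P' * Q, P' * D * Q) := by
  have hdet : IsUnit P.det := (isUnit_iff_isUnit_det P).mp hP
  refine ⟨P, P⁻¹, hP, isUnit_nonsing_inv_iff.mpr hP, ?_⟩
  rw [h, mul_assoc, mul_nonsing_inv P hdet, mul_one]

end StrictEquivalence

section JordanPerturbation

variable {R : Type*} [CommRing R]

def jordanSplitting (ε : R) : Matrix (Fin 3) (Fin 3) R := !![1, 1, 0; 0, ε, 1; 0, 0, ε]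

theorem det_jordanSplitting (ε : R) : (jordanSplitting ε).det = ε ^ 2 := by
  simp [jordanSplitting, det_fin_three, sq]

theorem jordanSplitting_mul (c ε : R) :
    jordanSplitting ε * !![c - ε, 0, 0; 0, c, 1; 0, 0, c] =
      !![c - ε, 1, 0; 0, c, 1; 0, 0, c] * jordanSplitting ε := by
  ext i j
  fin_cases i <;> fin_cases j <;> simp [jordanSplitting, mul_apply, Fin.sum_univ_succ] <;> ring

end JordanPerturbation

/-- The pencil `λI₃ + Ĵ`, a single `3 × 3` Jordan block at the eigenvalue `2` (so `Ĵ` has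
`−2` on the diagonal and `1` on the superdiagonal), lies in the closure of the union of
the strict equivalence orbits of the pencils `λI₃ + D_a = diag(λ − a, λI₂ + J₂(2))` with
`a ≠ 2`. Pencils `λB + A` are identified with pairs `(B, A)` of `3 × 3` matrices. -/
theorem jordan3_mem_closure_bundle :
    ((1 : Matrix (Fin 3) (Fin 3) ℂ),
      (!![(-2 : ℂ), 1, 0; 0, -2, 1; 0, 0, -2] : Matrix (Fin 3) (Fin 3) ℂ)) ∈
      closure { X : Matrix (Fin 3) (Fin 3) ℂ × Matrix (Fin 3) (Fin 3) ℂ |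
        ∃ a : ℂ, a ≠ 2 ∧ ∃ P Q : Matrix (Fin 3) (Fin 3) ℂ, IsUnit P ∧ IsUnit Q ∧
          X = (P * Q, P * (!![-a, 0, 0; 0, -2, 1; 0, 0, -2] : Matrix (Fin 3) (Fin 3) ℂ) * Q) } := by
  set f : ℂ → Matrix (Fin 3) (Fin 3) ℂ × Matrix (Fin 3) (Fin 3) ℂ :=
    fun ε => (1, !![-2 - ε, 1, 0; 0, -2, 1; 0, 0, -2])
  have hf : Continuous f := by fun_prop
  have hlim : Tendsto f (𝓝[≠] 0) (𝓝 (1, !![-2, 1, 0; 0, -2, 1; 0, 0, -2])) := by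
    simpa [f] using (hf.tendsto 0).mono_left nhdsWithin_le_nhds
  refine mem_closure_of_tendsto hlim ?_
  filter_upwards [self_mem_nhdsWithin] with ε (hε : ε ≠ 0)
  have hP : IsUnit (jordanSplitting ε) := by
    rw [isUnit_iff_isUnit_det, det_jordanSplitting]
    exact (pow_ne_zero 2 hε).isUnit
  refine ⟨2 + ε, by simpa using hε, ?_⟩
  rw [neg_add']
  exact exists_strictEquiv_one_of_mul_eq_mul hP (jordanSplitting_mul (-2) ε)
end

section
/- Let Ĵ be the 3×3 complex matrix with −2 on the diagonal, 1 on the superdiagonal, and zeros elsewhere. For a, b ∈ ℂ, let H_{a,b} be the 3×3 complex matrix with rows (−a, 0, 0), (0, −b, 1), (0, 0, −b). Then for every a, b ∈ ℂ, the pair (I₃, Ĵ) does NOT belong to the closure, in the space of pairs of 3×3 complex matrices with the standard topology, of the set { (P·Q, P·H_{a,b}·Q) : P and Q invertible 3×3 complex matrices }. -/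
open Matrix

private abbrev M3' := Matrix (Fin 3) (Fin 3) ℂ

private lemma smul_one3' (c : ℂ) : c • (1 : M3') = !![c,0,0; 0,c,0; 0,0,c] := by
  ext i j
  fin_cases i <;> fin_cases j <;> simp [Matrix.one_apply, Matrix.vecHead, Matrix.vecTail]

private lemma hKey (a b : ℂ) :
    (!![-a, 0, 0; 0, -b, 1; 0, 0, -b] + a • (1 : M3')) *
      ((!![-a, 0, 0; 0, -b, 1; 0, 0, -b] + b • (1 : M3')) *
       (!![-a, 0, 0; 0, -b, 1; 0, 0, -b] + b • (1 : M3'))) = 0 := by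
  rw [smul_one3', smul_one3']
  ext i j
  fin_cases i <;> fin_cases j <;>
    simp [Matrix.mul_apply, Fin.sum_univ_three, Matrix.vecHead, Matrix.vecTail]

private lemma hKey2 :
    (!![(-2:ℂ), 0, 0; 0, -2, 1; 0, 0, -2] + (2:ℂ) • (1 : M3')) *
      (!![(-2:ℂ), 0, 0; 0, -2, 1; 0, 0, -2] + (2:ℂ) • (1 : M3')) = 0 := by
  rw [smul_one3']
  ext i j
  fin_cases i <;> fin_cases j <;>
    simp [Matrix.mul_apply, Fin.sum_univ_three, Matrix.vecHead, Matrix.vecTail]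

private lemma Mc' (P Q H : M3') (c : ℂ) :
    P * H * Q * (P * Q).adjugate + (c * (P * Q).det) • 1
      = Q.det • (P * (H + c • 1) * P.adjugate) := by
  rw [adjugate_mul_distrib, det_mul]
  have h1 : P * H * Q * (Q.adjugate * P.adjugate) = Q.det • (P * H * P.adjugate) := by
    rw [Matrix.mul_assoc (P * H), ← Matrix.mul_assoc Q, mul_adjugate, Matrix.smul_mul,
      Matrix.one_mul, Matrix.mul_smul]
  have h2 : P * (c • (1 : M3')) * P.adjugate = (c * P.det) • 1 := by
    rw [Matrix.mul_smul, Matrix.mul_one, Matrix.smul_mul, mul_adjugate, smul_smul]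
  rw [h1, Matrix.mul_add, Matrix.add_mul, smul_add, h2, smul_smul]
  ring_nf

private lemma Ucomp' (P H K : M3') :
    (P * H * P.adjugate) * (P * K * P.adjugate) = P.det • (P * (H * K) * P.adjugate) := by
  simp only [Matrix.mul_assoc]
  have h : P.adjugate * (P * (K * P.adjugate)) = P.det • (K * P.adjugate) := by
    rw [← Matrix.mul_assoc, adjugate_mul, Matrix.smul_mul, Matrix.one_mul]
  rw [h, Matrix.mul_smul, Matrix.mul_smul]

private lemma contW (c : ℂ) :
    Continuous (fun X : M3' × M3' => X.2 * X.1.adjugate + (c * X.1.det) • (1 : M3')) :=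
  (continuous_snd.matrix_mul continuous_fst.matrix_adjugate).add
    ((continuous_const.mul continuous_fst.matrix_det).smul continuous_const)

private lemma aux_not_mem {S : Set (M3' × M3')} {f : M3' × M3' → M3'} (hf : Continuous f)
    (h0 : ∀ x ∈ S, f x = 0) {y : M3' × M3'} (hy : f y ≠ 0) : y ∉ closure S := by
  intro h
  refine hy ?_
  have hsub : closure S ⊆ f ⁻¹' {0} :=
    closure_minimal (fun x hx => h0 x hx) (isClosed_singleton.preimage hf)
  simpa using hsub h

/-- The pencil `λI₃ + Ĵ`, a single `3 × 3` Jordan block at the eigenvalue `2` (so `Ĵ` has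
`−2` on the diagonal and `1` on the superdiagonal), does not lie in the closure of the
strict equivalence orbit of any pencil `λI₃ + H_{a,b} = diag(λ − a, λI₂ + J₂(b))`.
Pencils `λB + A` are identified with pairs `(B, A)` of `3 × 3` matrices. This refutes
Theorem 7.5 of Pervouchine. -/
theorem jordan3_not_mem_closure_orbit (a b : ℂ) :
    ((1 : Matrix (Fin 3) (Fin 3) ℂ),
      (!![(-2 : ℂ), 1, 0; 0, -2, 1; 0, 0, -2] : Matrix (Fin 3) (Fin 3) ℂ)) ∉
      closure { X : Matrix (Fin 3) (Fin 3) ℂ × Matrix (Fin 3) (Fin 3) ℂ |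
        ∃ P Q : Matrix (Fin 3) (Fin 3) ℂ, IsUnit P ∧ IsUnit Q ∧
          X = (P * Q, P * (!![-a, 0, 0; 0, -b, 1; 0, 0, -b] : Matrix (Fin 3) (Fin 3) ℂ) * Q) } := by
  by_cases hab : a = 2 ∧ b = 2
  · obtain ⟨rfl, rfl⟩ := hab
    apply aux_not_mem (f := fun X : M3' × M3' =>
      (X.2 * X.1.adjugate + ((2:ℂ) * X.1.det) • 1) *
      (X.2 * X.1.adjugate + ((2:ℂ) * X.1.det) • 1))
    · exact (contW 2).matrix_mul (contW 2)
    · rintro X ⟨P, Q, -, -, rfl⟩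
      simp only
      rw [Mc', Matrix.smul_mul, Matrix.mul_smul, Ucomp', hKey2, Matrix.mul_zero,
        Matrix.zero_mul, smul_zero, smul_zero, smul_zero]
    · simp only [adjugate_one, det_one, Matrix.mul_one, mul_one]
      intro h0
      have h02 := (Matrix.ext_iff.2 h0) 0 2
      rw [smul_one3'] at h02
      simp [Matrix.mul_apply, Fin.sum_univ_three, Matrix.vecHead, Matrix.vecTail] at h02
  · apply aux_not_mem (f := fun X : M3' × M3' =>
      (X.2 * X.1.adjugate + (a * X.1.det) • 1) *
      ((X.2 * X.1.adjugate + (b * X.1.det) • 1) *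
       (X.2 * X.1.adjugate + (b * X.1.det) • 1)))
    · exact (contW a).matrix_mul ((contW b).matrix_mul (contW b))
    · rintro X ⟨P, Q, -, -, rfl⟩
      simp only
      rw [Mc' P Q _ a, Mc' P Q _ b]
      simp only [Matrix.smul_mul, Matrix.mul_smul]
      rw [Ucomp' P _ _]
      simp only [Matrix.mul_smul]
      rw [Ucomp' P _ _, hKey, Matrix.mul_zero, Matrix.zero_mul]
      simp
    · simp only [adjugate_one, det_one, Matrix.mul_one, mul_one]
      intro h0
      apply hab
      have h00 := (Matrix.ext_iff.2 h0) 0 0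
      have h02 := (Matrix.ext_iff.2 h0) 0 2
      rw [smul_one3', smul_one3'] at h00 h02
      simp [Matrix.mul_apply, Fin.sum_univ_three, Matrix.vecHead, Matrix.vecTail]
        at h00 h02
      rcases h00 with h | h
      · have ha : a = 2 := by linear_combination h
        have hb : b = 2 := by linear_combination (h02 - h) / 2
        exact ⟨ha, hb⟩
      · have hb : b = 2 := by linear_combination h
        have ha : a = 2 := by linear_combination h02 - 2 * h
        exact ⟨ha, hb⟩
end
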